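/- arXiv:2310.03354 — 5 statements merged into one kernel-verified Lean document; each statement's English description precedes it below -/
import Mathlib

section
/- A local Nash equilibrium need not be a global Nash equilibrium: there exists a mixed cooperative-competitive normal-form game with two teams of 2 players each and a mixed strategy profile σ such that no single player can improve its team's expected utility by unilaterally deviating, yet some team can strictly improve its expected utility by jointly changing both of its players' strategies. -/
open Finset

/-- Point-mass (pure) mixed strategy on strategy `a`. -/
def delta {α : Type*} [DecidableEq α] (a : α) : α → ℝ := fun b => if b = a then 1 else 0

/-- Expected utility of team 1 (team 2 receives the negative) in a two-team
zero-sum game with teams of two binary-action players. -/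
def EU2 (U : (Fin 2 → Bool) → (Fin 2 → Bool) → ℝ)
    (σ₀ σ₁ : Fin 2 → Bool → ℝ) : ℝ :=
  ∑ x : Fin 2 → Bool, ∑ y : Fin 2 → Bool,
    (∏ n, σ₀ n (x n)) * (∏ n, σ₁ n (y n)) * U x y

lemma prod_delta (x x' : Fin 2 → Bool) : (∏ n, delta (x n) (x' n)) = if x' = x then 1 else 0 := by
  simp [delta, Finset.prod_boole, funext_iff]

lemma EU2_delta (U) (x y : Fin 2 → Bool) :
    EU2 U (fun n => delta (x n)) (fun n => delta (y n)) = U x y := by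
  simp only [EU2, prod_delta]
  rw [Finset.sum_eq_single x]
  · rw [Finset.sum_eq_single y] <;> simp +contextual
  · simp +contextual
  · simp

/-- team action: 0 = Rock (both false), 2 = Scissors (both true), 1 = Paper (mixed) -/
def tm (x : Fin 2 → Bool) : ℕ :=
  if x 0 && x 1 then 2 else if !(x 0) && !(x 1) then 0 else 1

/-- RPS payoff for team 1. -/
def Urps (x y : Fin 2 → Bool) : ℝ :=
  if tm x = tm y then 0 else if tm x = (tm y + 1) % 3 then 1 else -1

lemma update_delta (x : Fin 2 → Bool) (n : Fin 2) (b : Bool) :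
    Function.update (fun m => delta (x m)) n (delta b)
      = fun m => delta (Function.update x n b m) := by
  funext m
  rcases eq_or_ne m n with h | h
  · subst h; simp
  · simp [Function.update_of_ne h]

/-- A local Nash equilibrium need not be a global Nash equilibrium: there is a
mixed cooperative-competitive game with two teams of 2 players each and a
strategy profile where no single player can improve its team's expected
utility by a unilateral deviation, yet some team can strictly improve its
expected utility by jointly changing both of its players' strategies. -/
theorem local_NE_not_global_NE :
    ∃ (U : (Fin 2 → Bool) → (Fin 2 → Bool) → ℝ) (σ₀ σ₁ : Fin 2 → Bool → ℝ),
      (∀ n b, 0 ≤ σ₀ n b) ∧ (∀ n b, 0 ≤ σ₁ n b) ∧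
      (∀ n, ∑ b, σ₀ n b = 1) ∧ (∀ n, ∑ b, σ₁ n b = 1) ∧
      -- local NE: no unilateral deviation improves the deviator's team utility
      (∀ n (b : Bool), EU2 U (Function.update σ₀ n (delta b)) σ₁ ≤ EU2 U σ₀ σ₁) ∧
      (∀ n (b : Bool), -(EU2 U σ₀ (Function.update σ₁ n (delta b))) ≤ -(EU2 U σ₀ σ₁)) ∧
      -- not a global NE: some team strictly improves by a joint deviation
      ((∃ x : Fin 2 → Bool, EU2 U σ₀ σ₁ < EU2 U (fun n => delta (x n)) σ₁) ∨
       (∃ y : Fin 2 → Bool, -(EU2 U σ₀ σ₁) < -(EU2 U σ₀ (fun n => delta (y n))))) := by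
  refine ⟨Urps, fun _ => delta true, fun _ => delta true, ?_, ?_, ?_, ?_, ?_, ?_, ?_⟩
  · intro n b; simp [delta]; positivity
  · intro n b; simp [delta]; positivity
  · intro n; simp [delta]
  · intro n; simp [delta]
  · intro n b
    rw [show (fun _ : Fin 2 => delta true) = (fun m => delta ((fun _ => true) m)) from rfl,
      update_delta, EU2_delta, EU2_delta]
    fin_cases n <;> cases b <;> simp [Urps, tm, Function.update]
  · intro n b
    rw [show (fun _ : Fin 2 => delta true) = (fun m => delta ((fun _ => true) m)) from rfl,
      update_delta, EU2_delta, EU2_delta]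
    fin_cases n <;> cases b <;> simp [Urps, tm, Function.update]
  · left
    refine ⟨fun _ => false, ?_⟩
    rw [show (fun _ : Fin 2 => delta true) = (fun m => delta ((fun _ => true) m)) from rfl,
      show (fun n : Fin 2 => delta ((fun _ => false) n)) = (fun m => delta ((fun _ : Fin 2 => false) m)) from rfl,
      EU2_delta, EU2_delta]
    norm_num [Urps, tm]
end

section
/- In the motivating-example game with learning policy π (a product of independent Bernoulli policies π_i over actions {0,1} for the N team members) and opponent joint mixed policy μ over {0,1}^N, the Q-value difference for player i satisfies Q_i(0) − Q_i(1) = μ(0_N)(1+ε) + π_{−i}(0_{N−1})·‖μ‖₁·(1+ε) + (π_{−i}(0_{N−1})·μ(1_N) + π_{−i}(1_{N−1})·μ(0_N))·(C − Nε) − 1, where ‖μ‖₁ = E_{y∼μ}[Σ_i y_i], π_{−i}(0_{N−1}) = Π_{j≠i} π_j(0), and π_{−i}(1_{N−1}) = Π_{j≠i} π_j(1). -/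
open Finset

/-- Number of ones (the `ℓ₁` norm) of a joint binary action profile. -/
def ones {N : ℕ} (x : Fin N → Bool) : ℝ := ∑ i, (if x i then (1 : ℝ) else 0)

/-- The all-zeros joint pure strategy `0_N`. -/
def allZ (N : ℕ) : Fin N → Bool := fun _ => false

/-- The all-ones joint pure strategy `1_N`. -/
def allO (N : ℕ) : Fin N → Bool := fun _ => true

/-- The team utility of the motivating-example game: `U(x,y) = -U(y,x)`,
`U(0_N, 1_N) = C`, `U(0_N, y) = ε‖y‖₁` for `y ≠ 1_N`,
`U(x, y) = ‖x‖₁ - ‖y‖₁` for `x, y ≠ 0_N`. -/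
def Umot {N : ℕ} (C ε : ℝ) (x y : Fin N → Bool) : ℝ :=
  if x = allZ N then (if y = allO N then C else ε * ones y)
  else if y = allZ N then -(if x = allO N then C else ε * ones x)
  else ones x - ones y

/-- Product distribution over joint profiles induced by independent Bernoulli
policies `π j`. -/
def prodDist {N : ℕ} (π : Fin N → Bool → ℝ) (y : Fin N → Bool) : ℝ := ∏ j, π j (y j)

/-- Point-mass distribution on a fixed joint pure strategy. -/
def pointMass {N : ℕ} (z : Fin N → Bool) (y : Fin N → Bool) : ℝ := if y = z then 1 else 0

/-- The Q-function of player `i` for action `a`: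
`Q_i(a) = E_{x₋ᵢ ∼ π₋ᵢ, y ∼ μ} U([a, x₋ᵢ], y)`. -/
def Qf {N : ℕ} (C ε : ℝ) (π : Fin N → Bool → ℝ) (μ : (Fin N → Bool) → ℝ)
    (i : Fin N) (a : Bool) : ℝ :=
  ∑ x : Fin N → Bool, ∑ y : Fin N → Bool,
    (if x i = a then ∏ j ∈ Finset.univ.erase i, π j (x j) else 0) * μ y * Umot C ε x y


section
variable {N : ℕ} (π : Fin N → Bool → ℝ) (i : Fin N)

lemma sum_prod_bool (f : Fin N → Bool → ℝ) :
    ∑ x : Fin N → Bool, ∏ j, f j (x j) = ∏ j, (f j false + f j true) := by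
  rw [← Fintype.piFinset_univ, ← Finset.prod_univ_sum]
  simp [Fintype.sum_bool, add_comm]

lemma sum_W_h (a : Bool) (h : Fin N → Bool → ℝ) :
    ∑ x : Fin N → Bool,
      (if x i = a then ∏ j ∈ Finset.univ.erase i, π j (x j) else 0) * ∏ j, h j (x j)
    = ((if false = a then h i false else 0) + (if true = a then h i true else 0)) *
      ∏ j ∈ Finset.univ.erase i, (π j false * h j false + π j true * h j true) := by
  have base := sum_prod_bool
    (f := fun j b => (if j = i then (if b = a then (1:ℝ) else 0) else π j b) * h j b)
  have lhs_eq : ∀ x : Fin N → Bool,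
      (if x i = a then ∏ j ∈ Finset.univ.erase i, π j (x j) else 0) * ∏ j, h j (x j)
      = ∏ j, ((if j = i then (if x j = a then (1:ℝ) else 0) else π j (x j)) * h j (x j)) := by
    intro x
    rw [← Finset.mul_prod_erase univ
        (fun j => (if j = i then (if x j = a then (1:ℝ) else 0) else π j (x j)) * h j (x j))
        (mem_univ i),
      ← Finset.mul_prod_erase univ (fun j => h j (x j)) (mem_univ i)]
    simp only [if_pos rfl]
    rw [show (∏ j ∈ univ.erase i,
          ((if j = i then (if x j = a then (1:ℝ) else 0) else π j (x j)) * h j (x j)))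
        = ∏ j ∈ univ.erase i, (π j (x j) * h j (x j)) from
        Finset.prod_congr rfl fun j hj => by rw [if_neg (Finset.ne_of_mem_erase hj)],
      Finset.prod_mul_distrib]
    split_ifs <;> ring
  rw [Finset.sum_congr rfl fun x _ => lhs_eq x, base,
    ← Finset.mul_prod_erase univ
      (fun j => (if j = i then (if false = a then (1:ℝ) else 0) else π j false) * h j false
        + (if j = i then (if true = a then (1:ℝ) else 0) else π j true) * h j true)
      (mem_univ i)]
  simp only [if_pos rfl]
  rw [show (∏ j ∈ univ.erase i,
      ((if j = i then (if false = a then (1:ℝ) else 0) else π j false) * h j false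
        + (if j = i then (if true = a then (1:ℝ) else 0) else π j true) * h j true))
    = ∏ j ∈ univ.erase i, (π j false * h j false + π j true * h j true) from
    Finset.prod_congr rfl fun j hj => by rw [if_neg (Finset.ne_of_mem_erase hj),
      if_neg (Finset.ne_of_mem_erase hj)]]
  congr 1
  split_ifs <;> ring

end

section
variable {N : ℕ} (π : Fin N → Bool → ℝ) (i : Fin N)


lemma sum_W_one (hπ1 : ∀ j, π j false + π j true = 1) (a : Bool) :
    ∑ x : Fin N → Bool,
      (if x i = a then ∏ j ∈ Finset.univ.erase i, π j (x j) else 0) = 1 := by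
  have h := sum_W_h π i a (fun _ _ => 1)
  simp only [mul_one, Finset.prod_const_one] at h
  rw [h, Finset.prod_congr rfl fun j _ => hπ1 j, Finset.prod_const_one, mul_one]
  cases a <;> simp

lemma sum_W_ones (hπ1 : ∀ j, π j false + π j true = 1) (a : Bool) :
    ∑ x : Fin N → Bool,
      (if x i = a then ∏ j ∈ Finset.univ.erase i, π j (x j) else 0) * ones x
    = (∑ k ∈ Finset.univ.erase i, π k true) + (if a then 1 else 0) := by
  have prod_one : ∀ (k : Fin N) (x : Fin N → Bool),
      (∏ j, (fun j b => if j = k then (if b then (1:ℝ) else 0) else 1) j (x j))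
      = if x k then (1:ℝ) else 0 := by
    intro k x
    simp only []
    rw [Finset.prod_ite_eq' univ k (fun j => if x j then (1:ℝ) else 0), if_pos (mem_univ k)]
  have swap : ∑ x : Fin N → Bool,
      (if x i = a then ∏ j ∈ Finset.univ.erase i, π j (x j) else 0) * ones x
    = ∑ k : Fin N, ∑ x : Fin N → Bool,
      (if x i = a then ∏ j ∈ Finset.univ.erase i, π j (x j) else 0) *
        ∏ j, (fun j b => if j = k then (if b then (1:ℝ) else 0) else 1) j (x j) := by
    rw [Finset.sum_comm]
    refine Finset.sum_congr rfl fun x _ => ?_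
    rw [← Finset.mul_sum]
    congr 1
    rw [ones]
    exact Finset.sum_congr rfl fun k _ => (prod_one k x).symm
  rw [swap, Finset.sum_congr rfl fun k _ =>
    sum_W_h π i a (fun j b => if j = k then (if b then (1:ℝ) else 0) else 1)]
  have hterm : ∀ k : Fin N,
      ((if false = a then (if i = k then (if (false:Bool) then (1:ℝ) else 0) else 1) else 0)
        + (if true = a then (if i = k then (if (true:Bool) then (1:ℝ) else 0) else 1) else 0)) *
      ∏ j ∈ Finset.univ.erase i,
        (π j false * (if j = k then (if (false:Bool) then (1:ℝ) else 0) else 1)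
          + π j true * (if j = k then (if (true:Bool) then (1:ℝ) else 0) else 1))
      = if k = i then (if a then 1 else 0) else π k true := by
    intro k
    by_cases hki : k = i
    · rw [hki, if_pos rfl]
      have hprod : ∏ j ∈ Finset.univ.erase i,
          (π j false * (if j = i then (if (false:Bool) then (1:ℝ) else 0) else 1)
            + π j true * (if j = i then (if (true:Bool) then (1:ℝ) else 0) else 1)) = 1 := by
        rw [Finset.prod_congr rfl (fun j hj => by
          rw [if_neg (Finset.ne_of_mem_erase hj), if_neg (Finset.ne_of_mem_erase hj),
            mul_one, mul_one, hπ1 j]), Finset.prod_const_one]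
      rw [hprod, mul_one]
      cases a <;> simp
    · rw [if_neg hki, if_neg (show ¬ (i = k) from fun h => hki h.symm),
        if_neg (show ¬ (i = k) from fun h => hki h.symm)]
      have hkmem : k ∈ Finset.univ.erase i := Finset.mem_erase.mpr ⟨hki, mem_univ k⟩
      rw [← Finset.mul_prod_erase _ _ hkmem]
      simp only [if_pos rfl]
      rw [Finset.prod_congr rfl (fun j hj => by
          rw [if_neg (Finset.ne_of_mem_erase hj), if_neg (Finset.ne_of_mem_erase hj),
            mul_one, mul_one, hπ1 j]),
        Finset.prod_const_one, mul_one]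
      cases a <;> simp
  rw [Finset.sum_congr rfl fun k _ => hterm k,
    ← Finset.sum_erase_add univ _ (mem_univ i), if_pos rfl,
    Finset.sum_congr rfl fun k hk => if_neg (Finset.ne_of_mem_erase hk)]
end


section
variable {N : ℕ} (μ : (Fin N → Bool) → ℝ)

lemma ones_allZ : ones (allZ N) = 0 := by simp [ones, allZ]
lemma ones_allO : ones (allO N) = N := by simp [ones, allO]
lemma allZNeAllO (hN : 1 ≤ N) : allZ N ≠ allO N := fun h => by
  have := congrFun h ⟨0, hN⟩; simp [allZ, allO] at this

lemma sum_split (g : (Fin N → Bool) → ℝ) (z : Fin N → Bool) (c : ℝ) :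
    ∑ y : Fin N → Bool, μ y * (g y + if y = z then c else 0)
    = (∑ y : Fin N → Bool, μ y * g y) + μ z * c := by
  simp only [mul_add, Finset.sum_add_distrib, mul_ite, mul_zero]
  rw [Finset.sum_ite_eq' univ z (fun y => μ y * c), if_pos (mem_univ z)]

lemma sum_base (hμ1 : ∑ y : Fin N → Bool, μ y = 1) (r : ℝ) :
    ∑ y : Fin N → Bool, μ y * (r - ones y)
    = r - (∑ y : Fin N → Bool, μ y * ones y) := by
  simp only [mul_sub, Finset.sum_sub_distrib, ← Finset.mul_sum]
  rw [Finset.sum_congr rfl fun y _ => mul_comm (μ y) r, ← Finset.mul_sum, hμ1, mul_one]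

lemma innerSumU (hN : 1 ≤ N) (C ε : ℝ)
    (hμ1 : ∑ y : Fin N → Bool, μ y = 1) (x : Fin N → Bool) :
    ∑ y : Fin N → Bool, μ y * Umot C ε x y
    = ones x * (1 - (1+ε) * μ (allZ N)) - (∑ y : Fin N → Bool, μ y * ones y)
      + (if x = allZ N then
          (1+ε)*(∑ y : Fin N → Bool, μ y * ones y) + (C - N*ε)*μ (allO N) else 0)
      - (if x = allO N then (C - N*ε)*μ (allZ N) else 0) := by
  by_cases hxz : x = allZ N
  · subst hxz
    have hpt : ∀ y : Fin N → Bool, μ y * Umot C ε (allZ N) y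
        = μ y * (ε * ones y + if y = allO N then C - ε*N else 0) := by
      intro y
      congr 1
      rw [Umot, if_pos rfl]
      by_cases hy : y = allO N
      · rw [if_pos hy, if_pos hy, hy, ones_allO]; ring
      · rw [if_neg hy, if_neg hy]; ring
    rw [Finset.sum_congr rfl fun y _ => hpt y,
      sum_split μ (fun y => ε * ones y) (allO N) (C - ε*N),
      if_pos rfl, if_neg (allZNeAllO hN), ones_allZ]
    have h1 : ∑ y : Fin N → Bool, μ y * (ε * ones y)
        = ε * ∑ y : Fin N → Bool, μ y * ones y := by
      rw [Finset.mul_sum]; exact Finset.sum_congr rfl fun y _ => by ring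
    rw [h1]; ring
  · by_cases hxo : x = allO N
    · have hpt : ∀ y : Fin N → Bool, μ y * Umot C ε x y
          = μ y * (((N:ℝ) - ones y) + if y = allZ N then -C - N else 0) := by
        intro y
        congr 1
        rw [Umot, if_neg hxz]
        by_cases hy : y = allZ N
        · rw [if_pos hy, if_pos hy, if_pos hxo, hy, ones_allZ]; ring
        · rw [if_neg hy, if_neg hy, hxo, ones_allO]; ring
      rw [Finset.sum_congr rfl fun y _ => hpt y,
        sum_split μ (fun y => (N:ℝ) - ones y) (allZ N) (-C - N),
        sum_base μ hμ1 (N:ℝ), if_neg hxz, if_pos hxo, hxo, ones_allO]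
      ring
    · have hpt : ∀ y : Fin N → Bool, μ y * Umot C ε x y
          = μ y * ((ones x - ones y)
              + if y = allZ N then -(ε * ones x) - ones x else 0) := by
        intro y
        congr 1
        rw [Umot, if_neg hxz]
        by_cases hy : y = allZ N
        · rw [if_pos hy, if_pos hy, if_neg hxo, hy, ones_allZ]; ring
        · rw [if_neg hy, if_neg hy]; ring
      rw [Finset.sum_congr rfl fun y _ => hpt y,
        sum_split μ (fun y => ones x - ones y) (allZ N) (-(ε * ones x) - ones x),
        sum_base μ hμ1 (ones x), if_neg hxz, if_neg hxo]
      ring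
end

/-- The Q-value difference identity in the motivating-example game:
`Q_i(0) − Q_i(1) = μ(0_N)(1+ε) + π₋ᵢ(0)‖μ‖₁(1+ε)
  + (π₋ᵢ(0)μ(1_N) + π₋ᵢ(1)μ(0_N))(C − Nε) − 1`. -/
theorem Q_diff_formula (N : ℕ) (hN : 2 ≤ N) (C ε : ℝ)
    (hε : 0 < ε) (hεC : ε < C) (hCN : C < (N : ℝ))
    (π : Fin N → Bool → ℝ) (μ : (Fin N → Bool) → ℝ)
    (hπ1 : ∀ j, π j false + π j true = 1) (hπ0 : ∀ j b, 0 ≤ π j b)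
    (hμ1 : ∑ y : Fin N → Bool, μ y = 1) (hμ0 : ∀ y, 0 ≤ μ y)
    (i : Fin N) :
    Qf C ε π μ i false - Qf C ε π μ i true =
      μ (allZ N) * (1 + ε)
      + (∏ j ∈ Finset.univ.erase i, π j false) * (∑ y : Fin N → Bool, μ y * ones y) * (1 + ε)
      + ((∏ j ∈ Finset.univ.erase i, π j false) * μ (allO N)
          + (∏ j ∈ Finset.univ.erase i, π j true) * μ (allZ N)) * (C - (N : ℝ) * ε)
      - 1 := by
  have hN1 : 1 ≤ N := le_trans one_le_two hN
  have key : ∀ a : Bool, Qf C ε π μ i a =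
      ((∑ k ∈ Finset.univ.erase i, π k true) + (if a then (1:ℝ) else 0))
        * (1 - (1+ε) * μ (allZ N))
      - (∑ y : Fin N → Bool, μ y * ones y)
      + (if false = a then (∏ j ∈ Finset.univ.erase i, π j false) else 0)
          * ((1+ε)*(∑ y : Fin N → Bool, μ y * ones y) + (C - N*ε)*μ (allO N))
      - (if true = a then (∏ j ∈ Finset.univ.erase i, π j true) else 0)
          * ((C - N*ε)*μ (allZ N)) := by
    intro a
    rw [Qf]
    have step1 : ∀ x : Fin N → Bool,
        ∑ y : Fin N → Bool,
          (if x i = a then ∏ j ∈ Finset.univ.erase i, π j (x j) else 0) * μ y * Umot C ε x y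
        = (if x i = a then ∏ j ∈ Finset.univ.erase i, π j (x j) else 0) *
            ∑ y : Fin N → Bool, μ y * Umot C ε x y := by
      intro x; rw [Finset.mul_sum]; exact Finset.sum_congr rfl fun y _ => by ring
    rw [Finset.sum_congr rfl fun x _ => step1 x,
      Finset.sum_congr rfl fun x _ => by rw [innerSumU μ hN1 C ε hμ1 x]]
    have expand : ∀ x : Fin N → Bool,
        (if x i = a then ∏ j ∈ Finset.univ.erase i, π j (x j) else 0) *
          (ones x * (1 - (1+ε) * μ (allZ N)) - (∑ y : Fin N → Bool, μ y * ones y)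
            + (if x = allZ N then
                (1+ε)*(∑ y : Fin N → Bool, μ y * ones y) + (C - N*ε)*μ (allO N) else 0)
            - (if x = allO N then (C - N*ε)*μ (allZ N) else 0))
        = ((if x i = a then ∏ j ∈ Finset.univ.erase i, π j (x j) else 0) * ones x)
            * (1 - (1+ε) * μ (allZ N))
          - (if x i = a then ∏ j ∈ Finset.univ.erase i, π j (x j) else 0)
            * (∑ y : Fin N → Bool, μ y * ones y)
          + (if x = allZ N then
              (if x i = a then ∏ j ∈ Finset.univ.erase i, π j (x j) else 0) *
                ((1+ε)*(∑ y : Fin N → Bool, μ y * ones y) + (C - N*ε)*μ (allO N)) else 0)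
          - (if x = allO N then
              (if x i = a then ∏ j ∈ Finset.univ.erase i, π j (x j) else 0) *
                ((C - N*ε)*μ (allZ N)) else 0) := by
      intro x; split_ifs <;> ring
    rw [Finset.sum_congr rfl fun x _ => expand x]
    rw [Finset.sum_sub_distrib, Finset.sum_add_distrib, Finset.sum_sub_distrib,
      ← Finset.sum_mul, ← Finset.sum_mul, sum_W_ones π i hπ1 a, sum_W_one π i hπ1 a,
      Finset.sum_ite_eq' univ (allZ N), Finset.sum_ite_eq' univ (allO N),
      if_pos (mem_univ (allZ N)), if_pos (mem_univ (allO N))]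
    have WZ : (if (allZ N) i = a then ∏ j ∈ Finset.univ.erase i, π j ((allZ N) j) else 0)
        = (if false = a then ∏ j ∈ Finset.univ.erase i, π j false else 0) := by
      simp [allZ]
    have WO : (if (allO N) i = a then ∏ j ∈ Finset.univ.erase i, π j ((allO N) j) else 0)
        = (if true = a then ∏ j ∈ Finset.univ.erase i, π j true else 0) := by
      simp [allO]
    rw [WZ, WO, one_mul]
  rw [key false, key true]
  simp only [if_pos rfl, Bool.false_eq_true, if_neg (by simp : ¬ (false = true)),
    if_neg (by simp : ¬ (true = false)), if_true, if_false]
  ring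
end

section
/- In the motivating-example game under self-play (opponent μ^t = π^t), if at time t each player's teammates' product probability of all playing 0 satisfies π^t_{−i}(0_{N−1}) ≤ 1/(N + 1 + 2C + ε) for all i, then Q_i^t(0) ≤ Q_i^t(1) for all i. -/
open Finset

lemma sum_prod_fn {N : ℕ} (h : Fin N → Bool → ℝ) :
    ∑ x : Fin N → Bool, ∏ j, h j (x j) = ∏ j, (h j false + h j true) := by
  classical
  rw [show (∑ x : Fin N → Bool, ∏ j, h j (x j)) = ∏ j, ∑ b : Bool, h j b from
    (Fintype.prod_sum (fun (j : Fin N) (b : Bool) => h j b)).symm]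
  exact Finset.prod_congr rfl fun j _ => by simp [add_comm]

lemma prod_single {N : ℕ} (f : Fin N → ℝ) (k : Fin N) (h : ∀ j, j ≠ k → f j = 1) :
    ∏ j, f j = f k :=
  Finset.prod_eq_single_of_mem k (Finset.mem_univ k) (fun j _ hj => h j hj)

lemma Umot_eq {N : ℕ} (hN : 1 ≤ N) (C ε : ℝ) (x y : Fin N → Bool) :
    Umot C ε x y = ones x - ones y
      + (if x = allZ N then (1:ℝ) else 0) * ((1+ε) * ones y)
      + (if x = allZ N then (1:ℝ) else 0) * (if y = allO N then (1:ℝ) else 0) * (C - (N:ℝ) * ε)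
      - (if y = allZ N then (1:ℝ) else 0) * ((1+ε) * ones x)
      - (if y = allZ N then (1:ℝ) else 0) * (if x = allO N then (1:ℝ) else 0) * (C - (N:ℝ) * ε) := by
  have hZO : allZ N ≠ allO N := by
    intro h
    have := congrFun h ⟨0, hN⟩
    simp [allZ, allO] at this
  have honesZ : ones (allZ N) = 0 := by simp [ones, allZ]
  have honesO : ones (allO N) = N := by simp [ones, allO]
  unfold Umot
  by_cases hx0 : x = allZ N <;> by_cases hy0 : y = allZ N <;>
    by_cases hyO : y = allO N <;> by_cases hxO : x = allO N <;>
    simp_all <;> ring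

lemma Qf_eval {N : ℕ} (hN : 1 ≤ N) (C ε : ℝ) (π : Fin N → Bool → ℝ)
    (hπ1 : ∀ j, π j false + π j true = 1) (i : Fin N) (a : Bool) :
    Qf C ε π (prodDist π) i a =
      ((if a then (1:ℝ) else 0) + ∑ k ∈ Finset.univ.erase i, π k true)
      - (∑ j, π j true)
      + (1 + ε) * (if false = a then ∏ j ∈ Finset.univ.erase i, π j false else 0) * (∑ j, π j true)
      + (C - (N:ℝ) * ε) * (if false = a then ∏ j ∈ Finset.univ.erase i, π j false else 0) * (∏ j, π j true)
      - (1 + ε) * ((if a then (1:ℝ) else 0) + ∑ k ∈ Finset.univ.erase i, π k true) * (∏ j, π j false)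
      - (C - (N:ℝ) * ε) * (if true = a then ∏ j ∈ Finset.univ.erase i, π j true else 0) * (∏ j, π j false) := by
  classical
  set A : (Fin N → Bool) → ℝ :=
    fun x => (if x i = a then ∏ j ∈ Finset.univ.erase i, π j (x j) else 0) with hA
  set fa : Fin N → Bool → ℝ :=
    fun j b => if j = i then (if b = a then 1 else 0) else π j b with hfa
  have hAfa : ∀ x, A x = ∏ j, fa j (x j) := by
    intro x
    rw [hA, ← Finset.prod_erase_mul Finset.univ _ (Finset.mem_univ i)]
    have h1 : ∏ j ∈ Finset.univ.erase i, fa j (x j) = ∏ j ∈ Finset.univ.erase i, π j (x j) :=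
      Finset.prod_congr rfl fun j hj => by
        simp [hfa, (Finset.mem_erase.mp hj).1]
    have h2 : fa i (x i) = if x i = a then 1 else 0 := by simp [hfa]
    rw [h1, h2]
    by_cases h : x i = a <;> simp [h]
  -- y-side sums
  have hB1 : ∑ y : Fin N → Bool, prodDist π y = 1 := by
    unfold prodDist
    rw [sum_prod_fn]
    exact Finset.prod_eq_one fun j _ => hπ1 j
  have hBind : ∀ k : Fin N,
      ∑ y : Fin N → Bool, prodDist π y * (if y k then (1:ℝ) else 0) = π k true := by
    intro k
    set h0 : Fin N → Bool → ℝ :=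
      fun j b => π j b * (if j = k then (if b then (1:ℝ) else 0) else 1) with hh0
    have step : ∀ y : Fin N → Bool, prodDist π y * (if y k then (1:ℝ) else 0)
        = ∏ j, h0 j (y j) := by
      intro y
      simp only [hh0]
      rw [Finset.prod_mul_distrib]
      unfold prodDist
      congr 1
      rw [Finset.prod_ite_eq' Finset.univ k (fun j => if y j then (1:ℝ) else 0)]
      simp
    calc ∑ y : Fin N → Bool, prodDist π y * (if y k then (1:ℝ) else 0)
        = ∑ y : Fin N → Bool, ∏ j, h0 j (y j) := Finset.sum_congr rfl fun y _ => step y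
      _ = ∏ j, (h0 j false + h0 j true) := sum_prod_fn h0
      _ = π k true := by
          rw [prod_single _ k (fun j hj => by simp [hh0, hj, hπ1 j])]
          simp [hh0]
  have hBones : ∑ y : Fin N → Bool, prodDist π y * ones y = ∑ j, π j true := by
    unfold ones
    simp only [Finset.mul_sum]
    rw [Finset.sum_comm]
    exact Finset.sum_congr rfl fun k _ => hBind k
  have hBZ : ∑ y : Fin N → Bool, prodDist π y * (if y = allZ N then (1:ℝ) else 0)
      = ∏ j, π j false := by
    simp only [mul_ite, mul_one, mul_zero]
    rw [Finset.sum_ite_eq' Finset.univ (allZ N) (prodDist π)]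
    simp [prodDist, allZ]
  have hBO : ∑ y : Fin N → Bool, prodDist π y * (if y = allO N then (1:ℝ) else 0)
      = ∏ j, π j true := by
    simp only [mul_ite, mul_one, mul_zero]
    rw [Finset.sum_ite_eq' Finset.univ (allO N) (prodDist π)]
    simp [prodDist, allO]
  -- x-side sums
  have hfasum : ∀ j, fa j false + fa j true = 1 := by
    intro j
    by_cases h : j = i
    · cases a <;> simp [hfa, h]
    · simp [hfa, h, hπ1 j]
  have hA1 : ∑ x : Fin N → Bool, A x = 1 := by
    simp only [hAfa]
    rw [sum_prod_fn]
    exact Finset.prod_eq_one fun j _ => hfasum j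
  have hAind : ∀ k : Fin N,
      ∑ x : Fin N → Bool, A x * (if x k then (1:ℝ) else 0)
        = if k = i then (if a then (1:ℝ) else 0) else π k true := by
    intro k
    set h1 : Fin N → Bool → ℝ :=
      fun j b => fa j b * (if j = k then (if b then (1:ℝ) else 0) else 1) with hh1
    have step : ∀ x : Fin N → Bool, A x * (if x k then (1:ℝ) else 0)
        = ∏ j, h1 j (x j) := by
      intro x
      simp only [hh1]
      rw [Finset.prod_mul_distrib, ← hAfa]
      congr 1
      rw [Finset.prod_ite_eq' Finset.univ k (fun j => if x j then (1:ℝ) else 0)]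
      simp
    calc ∑ x : Fin N → Bool, A x * (if x k then (1:ℝ) else 0)
        = ∑ x : Fin N → Bool, ∏ j, h1 j (x j) := Finset.sum_congr rfl fun x _ => step x
      _ = ∏ j, (h1 j false + h1 j true) := sum_prod_fn h1
      _ = if k = i then (if a then (1:ℝ) else 0) else π k true := by
          rw [prod_single _ k (fun j hj => by
            by_cases hji : j = i
            · subst hji
              cases a <;> simp [hh1, hfa, hj]
            · simp [hh1, hfa, hji, hj, hπ1 j])]
          by_cases hk : k = i
          · subst hk
            cases a <;> simp [hh1, hfa]
          · simp [hh1, hfa, hk, hπ1 k]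
  have hAones : ∑ x : Fin N → Bool, A x * ones x
      = (if a then (1:ℝ) else 0) + ∑ k ∈ Finset.univ.erase i, π k true := by
    unfold ones
    simp only [Finset.mul_sum]
    rw [Finset.sum_comm]
    simp only [hAind]
    rw [← Finset.add_sum_erase Finset.univ _ (Finset.mem_univ i)]
    simp only [if_pos rfl]
    congr 1
    exact Finset.sum_congr rfl fun k hk => by simp [(Finset.mem_erase.mp hk).1]
  have hAZ : ∑ x : Fin N → Bool, A x * (if x = allZ N then (1:ℝ) else 0)
      = if false = a then ∏ j ∈ Finset.univ.erase i, π j false else 0 := by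
    simp only [mul_ite, mul_one, mul_zero]
    rw [Finset.sum_ite_eq' Finset.univ (allZ N) A]
    simp only [Finset.mem_univ, if_pos, hA]
    simp [allZ]
  have hAO : ∑ x : Fin N → Bool, A x * (if x = allO N then (1:ℝ) else 0)
      = if true = a then ∏ j ∈ Finset.univ.erase i, π j true else 0 := by
    simp only [mul_ite, mul_one, mul_zero]
    rw [Finset.sum_ite_eq' Finset.univ (allO N) A]
    simp only [Finset.mem_univ, if_pos, hA]
    simp [allO]
  -- primed versions with constants
  have hAZ3 : ∑ x : Fin N → Bool, (1+ε) * (A x * (if x = allZ N then (1:ℝ) else 0))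
      = (1+ε) * (if false = a then ∏ j ∈ Finset.univ.erase i, π j false else 0) := by
    rw [← Finset.mul_sum, hAZ]
  have hAZ4 : ∑ x : Fin N → Bool, (C - (N:ℝ)*ε) * (A x * (if x = allZ N then (1:ℝ) else 0))
      = (C - (N:ℝ)*ε) * (if false = a then ∏ j ∈ Finset.univ.erase i, π j false else 0) := by
    rw [← Finset.mul_sum, hAZ]
  have hAones5 : ∑ x : Fin N → Bool, (1+ε) * (A x * ones x)
      = (1+ε) * ((if a then (1:ℝ) else 0) + ∑ k ∈ Finset.univ.erase i, π k true) := by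
    rw [← Finset.mul_sum, hAones]
  have hAO6 : ∑ x : Fin N → Bool, (C - (N:ℝ)*ε) * (A x * (if x = allO N then (1:ℝ) else 0))
      = (C - (N:ℝ)*ε) * (if true = a then ∏ j ∈ Finset.univ.erase i, π j true else 0) := by
    rw [← Finset.mul_sum, hAO]
  -- the double sum
  have expand : Qf C ε π (prodDist π) i a
      = ∑ x : Fin N → Bool, ∑ y : Fin N → Bool,
          ((A x * ones x) * prodDist π y
          - A x * (prodDist π y * ones y)
          + ((1+ε) * (A x * (if x = allZ N then (1:ℝ) else 0))) * (prodDist π y * ones y)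
          + ((C - (N:ℝ)*ε) * (A x * (if x = allZ N then (1:ℝ) else 0)))
              * (prodDist π y * (if y = allO N then (1:ℝ) else 0))
          - ((1+ε) * (A x * ones x)) * (prodDist π y * (if y = allZ N then (1:ℝ) else 0))
          - ((C - (N:ℝ)*ε) * (A x * (if x = allO N then (1:ℝ) else 0)))
              * (prodDist π y * (if y = allZ N then (1:ℝ) else 0))) := by
    unfold Qf
    refine Finset.sum_congr rfl fun x _ => Finset.sum_congr rfl fun y _ => ?_
    rw [Umot_eq hN]
    ring
  have e1 : (∑ x : Fin N → Bool, ∑ y : Fin N → Bool, (A x * ones x) * prodDist π y)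
      = (∑ x : Fin N → Bool, A x * ones x) * (∑ y : Fin N → Bool, prodDist π y) :=
    (Finset.sum_mul_sum _ _ _ _).symm
  have e2 : (∑ x : Fin N → Bool, ∑ y : Fin N → Bool, A x * (prodDist π y * ones y))
      = (∑ x : Fin N → Bool, A x) * (∑ y : Fin N → Bool, prodDist π y * ones y) :=
    (Finset.sum_mul_sum _ _ _ _).symm
  have e3 : (∑ x : Fin N → Bool, ∑ y : Fin N → Bool,
        ((1+ε) * (A x * (if x = allZ N then (1:ℝ) else 0))) * (prodDist π y * ones y))
      = (∑ x : Fin N → Bool, (1+ε) * (A x * (if x = allZ N then (1:ℝ) else 0)))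
        * (∑ y : Fin N → Bool, prodDist π y * ones y) :=
    (Finset.sum_mul_sum _ _ _ _).symm
  have e4 : (∑ x : Fin N → Bool, ∑ y : Fin N → Bool,
        ((C - (N:ℝ)*ε) * (A x * (if x = allZ N then (1:ℝ) else 0)))
          * (prodDist π y * (if y = allO N then (1:ℝ) else 0)))
      = (∑ x : Fin N → Bool, (C - (N:ℝ)*ε) * (A x * (if x = allZ N then (1:ℝ) else 0)))
        * (∑ y : Fin N → Bool, prodDist π y * (if y = allO N then (1:ℝ) else 0)) :=
    (Finset.sum_mul_sum _ _ _ _).symm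
  have e5 : (∑ x : Fin N → Bool, ∑ y : Fin N → Bool,
        ((1+ε) * (A x * ones x)) * (prodDist π y * (if y = allZ N then (1:ℝ) else 0)))
      = (∑ x : Fin N → Bool, (1+ε) * (A x * ones x))
        * (∑ y : Fin N → Bool, prodDist π y * (if y = allZ N then (1:ℝ) else 0)) :=
    (Finset.sum_mul_sum _ _ _ _).symm
  have e6 : (∑ x : Fin N → Bool, ∑ y : Fin N → Bool,
        ((C - (N:ℝ)*ε) * (A x * (if x = allO N then (1:ℝ) else 0)))
          * (prodDist π y * (if y = allZ N then (1:ℝ) else 0)))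
      = (∑ x : Fin N → Bool, (C - (N:ℝ)*ε) * (A x * (if x = allO N then (1:ℝ) else 0)))
        * (∑ y : Fin N → Bool, prodDist π y * (if y = allZ N then (1:ℝ) else 0)) :=
    (Finset.sum_mul_sum _ _ _ _).symm
  rw [expand]
  simp only [Finset.sum_add_distrib, Finset.sum_sub_distrib]
  rw [e1, e2, e3, e4, e5, e6, hA1, hB1, hBones, hBZ, hBO, hAones, hAZ3, hAZ4, hAones5, hAO6]
  ring

set_option maxHeartbeats 1000000 in
/-- Under self-play (the opponent is the product distribution of the current
policies), if every player's teammates' probability of all playing 0 is at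
most `1/(N + 1 + 2C + ε)`, then every player weakly prefers action 1:
`Q_i(0) ≤ Q_i(1)` for all `i`. -/
theorem selfplay_Q_le (N : ℕ) (hN : 2 ≤ N) (C ε : ℝ)
    (hε : 0 < ε) (hεC : ε < C) (hCN : C < (N : ℝ)) (hNε : (N : ℝ) * ε ≤ C)
    (π : Fin N → Bool → ℝ)
    (hπ1 : ∀ j, π j false + π j true = 1) (hπ0 : ∀ j b, 0 ≤ π j b)
    (hsmall : ∀ i : Fin N,
      (∏ j ∈ Finset.univ.erase i, π j false) ≤ 1 / ((N : ℝ) + 1 + 2 * C + ε)) :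
    ∀ i : Fin N, Qf C ε π (prodDist π) i false ≤ Qf C ε π (prodDist π) i true := by
  intro i
  have hN1 : 1 ≤ N := le_trans one_le_two hN
  have h0 := Qf_eval hN1 C ε π hπ1 i false
  have h1 := Qf_eval hN1 C ε π hπ1 i true
  simp only [if_true, if_false, Bool.false_eq_true, Bool.true_eq_false, ite_true, ite_false,
    reduceIte, mul_zero, zero_mul, mul_one, one_mul, add_zero, zero_add, sub_zero] at h0 h1
  rw [h0, h1]
  set p := ∏ j ∈ Finset.univ.erase i, π j false with hp
  set r := ∏ j ∈ Finset.univ.erase i, π j true with hr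
  set Si := ∑ k ∈ Finset.univ.erase i, π k true with hSi
  set S := ∑ j : Fin N, π j true with hS
  have hπle : ∀ j, π j true ≤ 1 := fun j => by
    have := hπ1 j; have := hπ0 j false; linarith
  have hπle0 : ∀ j, π j false ≤ 1 := fun j => by
    have := hπ1 j; have := hπ0 j true; linarith
  have hC : 0 < C := hε.trans hεC
  have hp0 : 0 ≤ p := Finset.prod_nonneg fun j _ => hπ0 j false
  have hr0 : 0 ≤ r := Finset.prod_nonneg fun j _ => hπ0 j true
  have hr1 : r ≤ 1 := Finset.prod_le_one (fun j _ => hπ0 j true) (fun j _ => hπle j)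
  have hP0 : (∏ j : Fin N, π j false) = π i false * p :=
    (Finset.mul_prod_erase Finset.univ _ (Finset.mem_univ i)).symm
  have hP1 : (∏ j : Fin N, π j true) = π i true * r :=
    (Finset.mul_prod_erase Finset.univ _ (Finset.mem_univ i)).symm
  rw [hP0, hP1]
  have hSN : S ≤ (N : ℝ) := by
    have := Finset.sum_le_sum (s := (Finset.univ : Finset (Fin N)))
      (f := fun j : Fin N => π j true) (g := fun _ => (1:ℝ)) (fun j _ => hπle j)
    simpa [hS] using this
  have hS0 : 0 ≤ S := Finset.sum_nonneg fun j _ => hπ0 j true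
  have hCNε : 0 ≤ C - (N:ℝ) * ε := by linarith
  have hden : 0 < (N : ℝ) + 1 + 2 * C + ε := by
    have : (0:ℝ) ≤ N := Nat.cast_nonneg N
    linarith
  have hsm : p * ((N : ℝ) + 1 + 2 * C + ε) ≤ 1 := by
    have := hsmall i
    rw [← hp] at this
    calc p * ((N : ℝ) + 1 + 2 * C + ε)
        ≤ (1 / ((N : ℝ) + 1 + 2 * C + ε)) * ((N : ℝ) + 1 + 2 * C + ε) :=
          mul_le_mul_of_nonneg_right this hden.le
      _ = 1 := by field_simp
  have hπi := hπ1 i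
  have hπi0 := hπ0 i false
  have hπi1 := hπ0 i true
  have hπile := hπle0 i
  -- key bounds
  have f1 : (1 + ε) * (p * S) ≤ (1 + ε) * (p * (N:ℝ)) := by
    have : p * S ≤ p * (N:ℝ) := mul_le_mul_of_nonneg_left hSN hp0
    nlinarith
  have f3 : (C - (N:ℝ)*ε) * (p * r) ≤ (C - (N:ℝ)*ε) * p := by
    have : p * r ≤ p * 1 := mul_le_mul_of_nonneg_left hr1 hp0
    nlinarith
  have f4 : (1 + ε) * (π i false * p) ≤ (1 + ε) * p := by
    have : π i false * p ≤ 1 * p := mul_le_mul_of_nonneg_right hπile hp0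
    nlinarith
  have fpC : 0 ≤ p * C := mul_nonneg hp0 hC.le
  have f2 : (C - (N:ℝ)*ε) * p * (π i true * r) + (C - (N:ℝ)*ε) * r * (π i false * p)
      = (C - (N:ℝ)*ε) * (p * r) := by
    linear_combination ((C - (N:ℝ)*ε) * p * r) * hπi
  linarith [f1, f2, f3, f4, fpC, hsm]
end

section
/- (Theorem 1, SP non-convergence) In the motivating-example game, any preference-preserving self-play learning process whose initialization satisfies π^0_{−i}(0_{N−1}) ≤ 1/(N + 1 + 2C + ε) for all i produces a policy sequence π^t that never converges to the global NE all-zeros policy; specifically, π^t_{−i}(0_{N−1}) ≤ 1/(N + 1 + 2C + ε) for all t and all i. -/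
open Finset

lemma sum_pi_bool {N : ℕ} (g : Fin N → Bool → ℝ) :
    ∑ x : Fin N → Bool, ∏ j, g j (x j) = ∏ j, (g j false + g j true) := by
  rw [← Fintype.piFinset_univ, ← Finset.prod_univ_sum]
  exact Finset.prod_congr rfl fun j _ => by simp [add_comm]

-- guarded sum of products over the erase-set
lemma sum_guard_erase {N : ℕ} (i : Fin N) (π : Fin N → Bool → ℝ)
    (h1 : ∀ j, π j false + π j true = 1) :
    ∑ x : Fin N → Bool,
      (if x i = false then ∏ j ∈ Finset.univ.erase i, π j (x j) else 0) = 1 := by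
  have hpt : ∀ x : Fin N → Bool,
      (if x i = false then ∏ j ∈ Finset.univ.erase i, π j (x j) else 0)
        = ∏ j, (fun j b => if j = i then (if b then 0 else 1) else π j b) j (x j) := by
    intro x
    rw [← Finset.mul_prod_erase univ _ (mem_univ i)]
    have h2 : ∏ j ∈ univ.erase i, (fun j b => if j = i then (if b then (0:ℝ) else 1) else π j b) j (x j)
        = ∏ j ∈ univ.erase i, π j (x j) :=
      Finset.prod_congr rfl fun j hj => by simp [Finset.ne_of_mem_erase hj]
    rw [h2]
    cases hxi : x i <;> simp
  rw [Finset.sum_congr rfl fun x _ => hpt x,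
    sum_pi_bool (fun j b => if j = i then (if b then (0:ℝ) else 1) else π j b)]
  have : ∀ j : Fin N, ((if j = i then (if false then (0:ℝ) else 1) else π j false)
      + (if j = i then (if true then (0:ℝ) else 1) else π j true)) = 1 := by
    intro j; by_cases hj : j = i <;> simp [hj, h1 j]
  rw [Finset.prod_congr rfl fun j _ => this j, Finset.prod_const_one]

lemma qdiff_step_A {N : ℕ} (C ε : ℝ) (π : Fin N → Bool → ℝ) (μ : (Fin N → Bool) → ℝ) (i : Fin N) :
    Qf C ε π μ i true - Qf C ε π μ i false =
      ∑ x : Fin N → Bool, (if x i = false then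
        (∏ j ∈ Finset.univ.erase i, π j (x j)) *
          (∑ y : Fin N → Bool, μ y *
            (Umot C ε (Function.update x i true) y - Umot C ε x y)) else 0) := by
  have he : Function.Involutive (fun x : Fin N → Bool => Function.update x i (!(x i))) := by
    intro x; funext j
    by_cases hj : j = i
    · subst hj; simp
    · simp [Function.update_of_ne hj]
  have hre : Qf C ε π μ i true =
      ∑ x : Fin N → Bool, ∑ y : Fin N → Bool,
        (if x i = false then ∏ j ∈ Finset.univ.erase i, π j (x j) else 0) * μ y *
          Umot C ε (Function.update x i true) y := by
    rw [Qf, ← Equiv.sum_comp he.toPerm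
      (fun x => ∑ y : Fin N → Bool,
        (if x i = true then ∏ j ∈ Finset.univ.erase i, π j (x j) else 0) * μ y * Umot C ε x y)]
    refine Finset.sum_congr rfl fun x _ => Finset.sum_congr rfl fun y _ => ?_
    have hex : (he.toPerm _) x = Function.update x i (!(x i)) := rfl
    cases hxi : x i
    · rw [hex, hxi]
      have hW : ∏ j ∈ univ.erase i, π j (Function.update x i true j)
          = ∏ j ∈ univ.erase i, π j (x j) :=
        Finset.prod_congr rfl fun j hj => by
          rw [Function.update_of_ne (Finset.ne_of_mem_erase hj)]
      simp [hW]
    · rw [hex, hxi]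
      simp
  rw [hre, Qf, ← Finset.sum_sub_distrib]
  refine Finset.sum_congr rfl fun x _ => ?_
  rw [← Finset.sum_sub_distrib]
  cases hxi : x i
  · simp only [hxi, eq_self_iff_true, if_true, Finset.mul_sum]
    exact Finset.sum_congr rfl fun y _ => by ring
  · simp [hxi]

lemma D_ident (N : ℕ) (hN : 2 ≤ N) (C ε : ℝ) (i : Fin N) (x y : Fin N → Bool) (hx : x i = false) :
    Umot C ε (Function.update x i true) y - Umot C ε x y =
      1 - (1+ε) * (if y = allZ N then 1 else 0)
        - (1+ε) * ones y * (if x = allZ N then 1 else 0)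
        - (C - ε*N) * ((if x = allZ N then 1 else 0) * (if y = allO N then 1 else 0)
            + (if Function.update x i true = allO N then 1 else 0) * (if y = allZ N then 1 else 0)) := by
  have hNpos : 0 < N := by omega
  set x' := Function.update x i true with hx'
  have hx'i : x' i = true := by simp [hx']
  have hx'Z : x' ≠ allZ N := by
    intro h; have := congrFun h i; rw [hx'i] at this; exact Bool.noConfusion this
  have hxO : x ≠ allO N := by
    intro h; have := congrFun h i; rw [hx] at this; exact Bool.noConfusion this
  have honesx' : ones x' = ones x + 1 := by
    unfold ones
    have hcg : ∑ j ∈ univ.erase i, (if x' j then (1:ℝ) else 0)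
        = ∑ j ∈ univ.erase i, (if x j then (1:ℝ) else 0) :=
      Finset.sum_congr rfl (fun j hj => by
        rw [hx', Function.update_of_ne (Finset.ne_of_mem_erase hj)])
    rw [← Finset.sum_erase_add _ _ (mem_univ i), ← Finset.sum_erase_add _ _ (mem_univ i),
      hcg, hx'i, hx]
    simp
  have honesZ : ones (allZ N) = 0 := by simp [ones, allZ]
  have honesO : ones (allO N) = N := by simp [ones, allO]
  have hZO : allZ N ≠ allO N := by
    intro h; have := congrFun h ⟨0, hNpos⟩; exact Bool.noConfusion this
  have hOZ : allO N ≠ allZ N := hZO.symm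
  by_cases hxZ : x = allZ N
  · have hx'O : x' ≠ allO N := by
      intro h
      have hnt : Nontrivial (Fin N) := Fin.nontrivial_iff_two_le.mpr hN
      obtain ⟨j, hj⟩ := exists_ne i
      have := congrFun h j
      rw [hx', Function.update_of_ne hj, hxZ] at this
      exact Bool.noConfusion this
    subst hxZ
    by_cases hyZ : y = allZ N
    · subst hyZ
      simp [Umot, hx'Z, hx'O, honesx', honesZ, hZO, hOZ]
      try ring
    · by_cases hyO : y = allO N
      · subst hyO
        simp [Umot, hx'Z, hZO, hOZ, hyZ, hx'O, honesx', honesZ, honesO]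
        try ring
      · simp [Umot, hx'Z, hyZ, hyO, honesx', honesZ]
        try ring
  · by_cases hyZ : y = allZ N
    · subst hyZ
      by_cases hx'O : x' = allO N
      · have hox : ones x = N - 1 := by
          have := honesx'; rw [hx'O, honesO] at this; linarith
        simp [Umot, hxZ, hx'Z, hx'O, hxO, hox, honesZ, hZO, hOZ]
        try ring
      · simp [Umot, hxZ, hx'Z, hx'O, hxO, honesx', honesZ, hZO, hOZ]
        try ring
    · simp [Umot, hxZ, hx'Z, hyZ, honesx']
      try ring

lemma sum_prodDist {N : ℕ} (π : Fin N → Bool → ℝ)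
    (h1 : ∀ j, π j false + π j true = 1) :
    ∑ y : Fin N → Bool, prodDist π y = 1 := by
  unfold prodDist
  rw [sum_pi_bool π, Finset.prod_congr rfl fun j _ => h1 j, Finset.prod_const_one]

lemma qdiff (N : ℕ) (hN : 2 ≤ N) (C ε : ℝ) (hε : 0 < ε) (hεC : ε < C) (hCN : C < (N : ℝ))
    (hNε : (N : ℝ) * ε ≤ C) (π : Fin N → Bool → ℝ)
    (h1 : ∀ j, π j false + π j true = 1) (h0 : ∀ j b, 0 ≤ π j b) (i : Fin N)
    (hP : (∏ j ∈ Finset.univ.erase i, π j false) ≤ 1 / ((N : ℝ) + 1 + 2 * C + ε)) :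
    Qf C ε π (prodDist π) i false ≤ Qf C ε π (prodDist π) i true := by
  have hNR : (2:ℝ) ≤ (N:ℝ) := by exact_mod_cast hN
  have hC : (0:ℝ) < C := lt_trans hε hεC
  set B : ℝ := 1 / ((N : ℝ) + 1 + 2 * C + ε) with hB
  set μ : (Fin N → Bool) → ℝ := prodDist π with hμ
  set W : (Fin N → Bool) → ℝ := fun x => ∏ j ∈ Finset.univ.erase i, π j (x j) with hW
  set P : ℝ := ∏ j ∈ Finset.univ.erase i, π j false with hPd
  set S : ℝ := ∏ j ∈ Finset.univ.erase i, π j true with hSd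
  set r : ℝ := ∏ j, π j false with hrd
  set s : ℝ := ∏ j, π j true with hsd
  set Smo : ℝ := ∑ y : Fin N → Bool, μ y * ones y with hSmo
  set oneOff : Fin N → Bool := Function.update (allO N) i false with hoo
  -- basic component sums
  have hSμ : ∑ y : Fin N → Bool, μ y = 1 := sum_prodDist π h1
  have hμZ : μ (allZ N) = r := Finset.prod_congr rfl fun j _ => rfl
  have hμO : μ (allO N) = s := Finset.prod_congr rfl fun j _ => rfl
  have hSZ : ∑ y : Fin N → Bool, μ y * (if y = allZ N then (1:ℝ) else 0) = r := by
    simp only [mul_ite, mul_one, mul_zero]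
    refine (Finset.sum_ite_eq' univ (allZ N) μ).trans ?_
    simpa only [Finset.mem_univ, if_true] using hμZ
  have hSO : ∑ y : Fin N → Bool, μ y * (if y = allO N then (1:ℝ) else 0) = s := by
    simp only [mul_ite, mul_one, mul_zero]
    refine (Finset.sum_ite_eq' univ (allO N) μ).trans ?_
    simpa only [Finset.mem_univ, if_true] using hμO
  -- per-x evaluation of the inner y-sum
  have hy : ∀ x : Fin N → Bool, x i = false →
      (∑ y : Fin N → Bool, μ y * (Umot C ε (Function.update x i true) y - Umot C ε x y))
      = 1 - (1+ε)*r - (1+ε)*(if x = allZ N then (1:ℝ) else 0)*Smo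
          - (C-ε*N)*((if x = allZ N then (1:ℝ) else 0)*s
              + (if Function.update x i true = allO N then (1:ℝ) else 0)*r) := by
    intro x hx
    have hpt : ∀ y : Fin N → Bool,
        μ y * (Umot C ε (Function.update x i true) y - Umot C ε x y)
        = μ y - (1+ε)*(μ y * (if y = allZ N then (1:ℝ) else 0))
            - ((1+ε)*(if x = allZ N then (1:ℝ) else 0))*(μ y * ones y)
            - ((C-ε*N)*(if x = allZ N then (1:ℝ) else 0))*(μ y * (if y = allO N then (1:ℝ) else 0))
            - ((C-ε*N)*(if Function.update x i true = allO N then (1:ℝ) else 0))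
                *(μ y * (if y = allZ N then (1:ℝ) else 0)) := by
      intro y
      rw [D_ident N hN C ε i x y hx]
      ring
    rw [Finset.sum_congr rfl fun y _ => hpt y]
    rw [Finset.sum_sub_distrib, Finset.sum_sub_distrib, Finset.sum_sub_distrib,
      Finset.sum_sub_distrib, ← Finset.mul_sum, ← Finset.mul_sum, ← Finset.mul_sum,
      ← Finset.mul_sum, hSμ, hSZ, hSO]
    rw [← hSmo]
    ring
  -- facts about oneOff and allZ
  have hooi : oneOff i = false := by rw [hoo]; simp
  have hWZ : W (allZ N) = P := rfl
  have hWoo : W oneOff = S := by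
    refine Finset.prod_congr rfl fun j hj => ?_
    rw [hoo, Function.update_of_ne (Finset.ne_of_mem_erase hj)]
    rfl
  have hupoo : Function.update oneOff i true = allO N := by
    funext j
    by_cases hj : j = i
    · subst hj; simp [allO]
    · rw [Function.update_of_ne hj, hoo, Function.update_of_ne hj]
  have hFiff : ∀ x : Fin N → Bool, x i = false →
      (Function.update x i true = allO N ↔ x = oneOff) := by
    intro x hx
    constructor
    · intro h
      funext j
      by_cases hj : j = i
      · subst hj; rw [hx, hooi]
      · have := congrFun h j
        rw [Function.update_of_ne hj] at this
        rw [this, hoo, Function.update_of_ne hj]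
        try rfl
    · intro h; rw [h, hupoo]
  have hZoo : allZ N ≠ oneOff := by
    intro h
    have hnt : Nontrivial (Fin N) := Fin.nontrivial_iff_two_le.mpr hN
    obtain ⟨j, hj⟩ := exists_ne i
    have := congrFun h j
    rw [hoo, Function.update_of_ne hj] at this
    exact Bool.noConfusion this
  -- main computation
  have hmain : Qf C ε π μ i true - Qf C ε π μ i false
      = (1 - (1+ε)*r) * 1 - (1+ε)*Smo*P - (C-ε*N)*s*P - (C-ε*N)*r*S := by
    rw [qdiff_step_A C ε π μ i]
    have hptx : ∀ x : Fin N → Bool,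
        (if x i = false then W x *
          (∑ y : Fin N → Bool, μ y *
            (Umot C ε (Function.update x i true) y - Umot C ε x y)) else 0)
        = (1 - (1+ε)*r) * (if x i = false then W x else 0)
          - (1+ε)*Smo * (if x = allZ N then W x else 0)
          - (C-ε*N)*s * (if x = allZ N then W x else 0)
          - (C-ε*N)*r * (if x = oneOff then W x else 0) := by
      intro x
      by_cases hxi : x i = false
      · rw [if_pos hxi, if_pos hxi, hy x hxi]
        by_cases hxZ : x = allZ N
        · have hxF : ¬ (Function.update x i true = allO N) := by
            rw [hFiff x hxi, hxZ]
            exact fun h => hZoo h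
          have hxoo : ¬ (x = oneOff) := by rw [hxZ]; exact hZoo
          rw [if_pos hxZ, if_pos hxZ, if_neg hxF, if_neg hxoo]
          ring
        · by_cases hxF : Function.update x i true = allO N
          · have hxoo : x = oneOff := (hFiff x hxi).mp hxF
            rw [if_neg hxZ, if_neg hxZ, if_pos hxF, if_pos hxoo]
            ring
          · have hxoo : ¬ (x = oneOff) := fun h => hxF ((hFiff x hxi).mpr h)
            rw [if_neg hxZ, if_neg hxZ, if_neg hxF, if_neg hxoo]
            ring
      · have hxZ : ¬ (x = allZ N) := fun h => hxi (by rw [h]; rfl)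
        have hxoo : ¬ (x = oneOff) := fun h => hxi (by rw [h]; exact hooi)
        rw [if_neg hxi, if_neg hxi, if_neg hxZ, if_neg hxoo]
        ring
    rw [Finset.sum_congr rfl fun x _ => hptx x]
    rw [Finset.sum_sub_distrib, Finset.sum_sub_distrib, Finset.sum_sub_distrib,
      ← Finset.mul_sum, ← Finset.mul_sum, ← Finset.mul_sum, ← Finset.mul_sum,
      sum_guard_erase i π h1,
      Finset.sum_ite_eq' univ (allZ N) W, Finset.sum_ite_eq' univ oneOff W,
      if_pos (mem_univ _), if_pos (mem_univ _), hWZ, hWoo]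
  -- bounds
  have hp01 : ∀ j b, π j b ≤ 1 := by
    intro j b
    have := h1 j
    cases b
    · have := h0 j true; linarith
    · have := h0 j false; linarith
  have hPnn : 0 ≤ P := Finset.prod_nonneg fun j _ => h0 j false
  have hSnn : 0 ≤ S := Finset.prod_nonneg fun j _ => h0 j true
  have hS1 : S ≤ 1 := Finset.prod_le_one (fun j _ => h0 j true) (fun j _ => hp01 j true)
  have hrP : r = π i false * P := (Finset.mul_prod_erase univ _ (mem_univ i)).symm
  have hsS : s = π i true * S := (Finset.mul_prod_erase univ _ (mem_univ i)).symm
  have hrnn : 0 ≤ r := Finset.prod_nonneg fun j _ => h0 j false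
  have hrle : r ≤ P := by
    calc r = π i false * P := hrP
      _ ≤ 1 * P := mul_le_mul_of_nonneg_right (hp01 i false) hPnn
      _ = P := one_mul P
  have hPS : s*P + r*S = P*S := by
    rw [hrP, hsS]
    linear_combination (S*P) * (h1 i)
  have hSmonn : 0 ≤ Smo := by
    refine Finset.sum_nonneg fun y _ => mul_nonneg (Finset.prod_nonneg fun j _ => h0 j (y j))
      (Finset.sum_nonneg fun k _ => by positivity)
  have honesN : ∀ y : Fin N → Bool, ones y ≤ N := by
    intro y
    have h2 : ones y ≤ ∑ _k : Fin N, (1:ℝ) := by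
      refine Finset.sum_le_sum fun k _ => ?_
      by_cases h : y k <;> simp [ones, h]
    simpa using h2
  have hSmoN : Smo ≤ N := by
    calc Smo ≤ ∑ y : Fin N → Bool, μ y * N := by
          refine Finset.sum_le_sum fun y _ => ?_
          exact mul_le_mul_of_nonneg_left (honesN y)
            (Finset.prod_nonneg fun j _ => h0 j (y j))
      _ = N := by rw [← Finset.sum_mul, hSμ, one_mul]
  have hKpos : (0:ℝ) < (N : ℝ) + 1 + 2 * C + ε := by linarith
  have hBnn : 0 ≤ B := by rw [hB]; positivity
  have hc : 0 ≤ C - ε*N := by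
    have := mul_comm ε (N:ℝ)
    linarith [hNε]
  have ha : (0:ℝ) ≤ 1 + ε := by linarith
  -- final numeric estimate
  have e1 : (1+ε)*r ≤ (1+ε)*B := mul_le_mul_of_nonneg_left (le_trans hrle hP) ha
  have e2 : (1+ε)*Smo*P ≤ (1+ε)*((N:ℝ)*B) := by
    have h2 : Smo*P ≤ (N:ℝ)*B :=
      calc Smo*P ≤ (N:ℝ)*P := mul_le_mul_of_nonneg_right hSmoN hPnn
        _ ≤ (N:ℝ)*B := mul_le_mul_of_nonneg_left hP (by linarith)
    calc (1+ε)*Smo*P = (1+ε)*(Smo*P) := by ring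
      _ ≤ (1+ε)*((N:ℝ)*B) := mul_le_mul_of_nonneg_left h2 ha
  have e3 : (C-ε*N)*s*P + (C-ε*N)*r*S ≤ (C-ε*N)*B := by
    have hsp : s*P + r*S ≤ B := by
      rw [hPS]
      calc P*S ≤ P*1 := mul_le_mul_of_nonneg_left hS1 hPnn
        _ = P := mul_one P
        _ ≤ B := hP
    calc (C-ε*N)*s*P + (C-ε*N)*r*S = (C-ε*N)*(s*P + r*S) := by ring
      _ ≤ (C-ε*N)*B := mul_le_mul_of_nonneg_left hsp hc
  have e4 : (1+ε)*B + (1+ε)*((N:ℝ)*B) + (C-ε*N)*B ≤ 1 := by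
    have hcoef : (1+ε) + (1+ε)*(N:ℝ) + (C-ε*N) ≤ (N:ℝ)+1+2*C+ε := by
      have hx : (1+ε)*(N:ℝ) = (N:ℝ) + ε*(N:ℝ) := by ring
      linarith
    calc (1+ε)*B + (1+ε)*((N:ℝ)*B) + (C-ε*N)*B
        = ((1+ε) + (1+ε)*(N:ℝ) + (C-ε*N))*B := by ring
      _ ≤ ((N:ℝ)+1+2*C+ε)*B := mul_le_mul_of_nonneg_right hcoef hBnn
      _ = 1 := by rw [hB]; field_simp
  linarith [hmain, e1, e2, e3, e4]

/-- Theorem 1 (SP non-convergence): any preference-preserving self-play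
learning process whose initialization satisfies
`π⁰₋ᵢ(0_{N−1}) ≤ 1/(N + 1 + 2C + ε)` for all `i` keeps satisfying this bound
for all times `t`, and hence the policy never converges to the global NE
all-zeros policy. -/
theorem sp_does_not_converge_to_global_NE (N : ℕ) (hN : 2 ≤ N) (C ε : ℝ)
    (hε : 0 < ε) (hεC : ε < C) (hCN : C < (N : ℝ)) (hNε : (N : ℝ) * ε ≤ C)
    (π : ℕ → Fin N → Bool → ℝ)
    (hπ1 : ∀ t j, π t j false + π t j true = 1) (hπ0 : ∀ t j b, 0 ≤ π t j b)
    -- preference preservation (binary-action form): if action 0 has never been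
    -- preferred so far, the probability of action 0 does not increase
    (hpref : ∀ t (i : Fin N),
      (∀ t' ≤ t, Qf C ε (π t') (prodDist (π t')) i false ≤
                 Qf C ε (π t') (prodDist (π t')) i true) →
      π (t + 1) i false ≤ π t i false)
    (hinit : ∀ i : Fin N,
      (∏ j ∈ Finset.univ.erase i, π 0 j false) ≤ 1 / ((N : ℝ) + 1 + 2 * C + ε)) :
    (∀ t (i : Fin N),
      (∏ j ∈ Finset.univ.erase i, π t j false) ≤ 1 / ((N : ℝ) + 1 + 2 * C + ε)) ∧
    ¬ (∀ i : Fin N, Filter.Tendsto (fun t => π t i false) Filter.atTop (nhds 1)) := by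
  have key : ∀ t, ∀ t' ≤ t, ∀ i : Fin N,
      (∏ j ∈ Finset.univ.erase i, π t' j false) ≤ 1 / ((N : ℝ) + 1 + 2 * C + ε) := by
    intro t
    induction t with
    | zero =>
      intro t' ht' i
      have h0 : t' = 0 := Nat.le_zero.mp ht'
      subst h0
      exact hinit i
    | succ n ih =>
      intro t' ht' i
      by_cases h : t' ≤ n
      · exact ih t' h i
      · have ht'' : t' = n + 1 := by omega
        subst ht''
        have hmono : ∀ j : Fin N, π (n+1) j false ≤ π n j false := by
          intro j
          refine hpref n j fun t'' ht2 => ?_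
          exact qdiff N hN C ε hε hεC hCN hNε (π t'') (hπ1 t'') (hπ0 t'') j (ih t'' ht2 j)
        calc (∏ j ∈ Finset.univ.erase i, π (n+1) j false)
            ≤ ∏ j ∈ Finset.univ.erase i, π n j false :=
              Finset.prod_le_prod (fun j _ => hπ0 (n+1) j false) (fun j _ => hmono j)
          _ ≤ _ := ih n le_rfl i
  refine ⟨fun t i => key t t le_rfl i, ?_⟩
  intro hconv
  have hNpos : 0 < N := by omega
  set i0 : Fin N := ⟨0, hNpos⟩ with hi0
  have hT : Filter.Tendsto (fun t => ∏ j ∈ Finset.univ.erase i0, π t j false) Filter.atTop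
      (nhds (∏ _j ∈ Finset.univ.erase i0, (1:ℝ))) :=
    tendsto_finset_prod _ fun j _ => hconv j
  rw [Finset.prod_const_one] at hT
  have hle : (1:ℝ) ≤ 1 / ((N : ℝ) + 1 + 2 * C + ε) :=
    le_of_tendsto' hT fun t => key t t le_rfl i0
  have hNR : (2:ℝ) ≤ (N:ℝ) := by exact_mod_cast hN
  have hC : (0:ℝ) < C := lt_trans hε hεC
  have hKpos : (0:ℝ) < (N:ℝ) + 1 + 2*C + ε := by linarith
  have hlt : 1 / ((N : ℝ) + 1 + 2 * C + ε) < 1 := by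
    rw [div_lt_one hKpos]; linarith
  linarith
end

section
/- (Theorem 2, part 2: strictness) In the motivating-example game trained against the fixed opponent μ = 1_N with a preference-preserving algorithm, the symmetric initialization π_i^0(0) = (N+C)^{−1/(N−1)} for all i converges to the global NE (all-zeros), because it maintains Q_i^t(0) ≥ Q_i^t(1) for all t and i. The same initialization under self-play does NOT converge to the global NE: under self-play, π^t_{−i}(0_{N−1}) < 1/N holds for all t and i (by induction), which forces Q_i^t(0) < Q_i^t(1) for all t, i, and hence the probability of action 0 is non-increasing. Therefore S_μ strictly contains S_SP. -/
open Finset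

namespace StrictAux

variable {N : ℕ}


def merge (i : Fin N) (a : Bool) (z : {j : Fin N // j ≠ i} → Bool) : Fin N → Bool :=
  fun j => if h : j = i then a else z ⟨j, h⟩

@[simp] lemma merge_self (i : Fin N) (a : Bool) (z : {j : Fin N // j ≠ i} → Bool) :
    merge i a z i = a := by simp [merge]

lemma merge_ne (i : Fin N) (a : Bool) (z : {j : Fin N // j ≠ i} → Bool) {j : Fin N}
    (h : j ≠ i) : merge i a z j = z ⟨j, h⟩ := by simp [merge, h]

lemma merge_bij (i : Fin N) :
    Function.Bijective (fun p : Bool × ({j : Fin N // j ≠ i} → Bool) => merge i p.1 p.2) := by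
  rw [Function.bijective_iff_has_inverse]
  refine ⟨fun x => (x i, fun j => x j.1), ?_, ?_⟩
  · rintro ⟨a, z⟩
    refine Prod.ext (by simp) ?_
    funext j
    simp [merge_ne i a z j.2]
  · intro x
    funext j
    by_cases h : j = i
    · subst h; simp
    · simp [merge_ne _ _ _ h]

lemma sum_split (i : Fin N) (F : (Fin N → Bool) → ℝ) :
    ∑ x : Fin N → Bool, F x
      = ∑ p : Bool × ({j : Fin N // j ≠ i} → Bool), F (merge i p.1 p.2) :=
  (Fintype.sum_bijective _ (merge_bij i) _ _ (fun _ => rfl)).symm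

/-- weight of a reduced profile -/
def W (π : Fin N → Bool → ℝ) (i : Fin N) (z : {j : Fin N // j ≠ i} → Bool) : ℝ :=
  ∏ j : {j : Fin N // j ≠ i}, π j.1 (z j)

lemma prod_erase_eq_W (π : Fin N → Bool → ℝ) (i : Fin N) (a : Bool)
    (z : {j : Fin N // j ≠ i} → Bool) :
    ∏ j ∈ Finset.univ.erase i, π j (merge i a z j) = W π i z := by
  rw [Finset.prod_subtype (Finset.univ.erase i) (p := fun j => j ≠ i)
    (by intro x; simp [Finset.mem_erase])]
  exact Finset.prod_congr rfl fun j _ => by rw [merge_ne i a z j.2]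

lemma Qf_eq (C ε : ℝ) (π : Fin N → Bool → ℝ) (μ : (Fin N → Bool) → ℝ) (i : Fin N) (a : Bool) :
    Qf C ε π μ i a
      = ∑ z : {j : Fin N // j ≠ i} → Bool,
          W π i z * ∑ y : Fin N → Bool, μ y * Umot C ε (merge i a z) y := by
  unfold Qf
  rw [sum_split i, Fintype.sum_prod_type]
  have : ∀ b : Bool, ∀ z : {j : Fin N // j ≠ i} → Bool,
      (∑ y : Fin N → Bool,
        (if merge i b z i = a then ∏ j ∈ Finset.univ.erase i, π j (merge i b z j) else 0)
          * μ y * Umot C ε (merge i b z) y)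
      = if b = a then W π i z * ∑ y : Fin N → Bool, μ y * Umot C ε (merge i b z) y else 0 := by
    intro b z
    rw [merge_self, prod_erase_eq_W]
    by_cases h : b = a
    · simp only [if_pos h, Finset.mul_sum]; exact Finset.sum_congr rfl fun y _ => by ring
    · simp [if_neg h]
  simp only [this]
  cases a <;> simp [Fintype.sum_bool]

lemma sum_W (π : Fin N → Bool → ℝ) (i : Fin N) (h1 : ∀ j, π j false + π j true = 1) :
    ∑ z : {j : Fin N // j ≠ i} → Bool, W π i z = 1 := by
  unfold W
  rw [← Fintype.piFinset_univ, ← Finset.prod_univ_sum]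
  rw [Finset.prod_eq_one]
  intro j _
  rw [Fintype.sum_bool]
  linarith [h1 j.1]

lemma sum_W_ite (π : Fin N → Bool → ℝ) (i : Fin N) (h1 : ∀ j, π j false + π j true = 1)
    (c e : ℝ) (w : {j : Fin N // j ≠ i} → Bool) :
    ∑ z : {j : Fin N // j ≠ i} → Bool, W π i z * (c + if z = w then e else 0)
      = c + W π i w * e := by
  have : ∀ z : {j : Fin N // j ≠ i} → Bool,
      W π i z * (c + if z = w then e else 0)
        = W π i z * c + (if z = w then W π i w * e else 0) := by
    intro z
    by_cases h : z = w
    · subst h; simp [mul_add]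
    · simp [h]
  simp only [this, Finset.sum_add_distrib, ← Finset.sum_mul, sum_W π i h1,
    Finset.sum_ite_eq' Finset.univ w, Finset.mem_univ, if_true, one_mul]

@[simp] lemma ones_allZ : ones (allZ N) = 0 := by simp [ones, allZ]
@[simp] lemma ones_allO : ones (allO N) = N := by simp [ones, allO]

lemma allZ_ne_allO (hN : 0 < N) : allZ N ≠ allO N := by
  intro h
  have := congrFun h ⟨0, hN⟩
  simp [allZ, allO] at this

lemma merge_true_ne_allZ (i : Fin N) (z : {j : Fin N // j ≠ i} → Bool) :
    merge i true z ≠ allZ N := by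
  intro h
  have := congrFun h i
  simp [merge, allZ] at this

lemma merge_false_ne_allO (i : Fin N) (z : {j : Fin N // j ≠ i} → Bool) :
    merge i false z ≠ allO N := by
  intro h
  have := congrFun h i
  simp [merge, allO] at this

lemma merge_false_eq_allZ (i : Fin N) (z : {j : Fin N // j ≠ i} → Bool) :
    merge i false z = allZ N ↔ z = fun _ => false := by
  constructor
  · intro h
    funext j
    have := congrFun h j.1
    rw [merge_ne i false z j.2] at this
    simpa [allZ] using this
  · intro h
    subst h
    funext j
    by_cases hj : j = i
    · subst hj; simp [merge, allZ]
    · simp [merge_ne i false _ hj, allZ]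

lemma merge_true_eq_allO (i : Fin N) (z : {j : Fin N // j ≠ i} → Bool) :
    merge i true z = allO N ↔ z = fun _ => true := by
  constructor
  · intro h
    funext j
    have := congrFun h j.1
    rw [merge_ne i true z j.2] at this
    simpa [allO] using this
  · intro h
    subst h
    funext j
    by_cases hj : j = i
    · subst hj; simp [merge, allO]
    · simp [merge_ne i true _ hj, allO]

def onesS {N : ℕ} (i : Fin N) (z : {j : Fin N // j ≠ i} → Bool) : ℝ :=
  ∑ j : {j : Fin N // j ≠ i}, (if z j then (1 : ℝ) else 0)

lemma ones_merge (i : Fin N) (a : Bool) (z : {j : Fin N // j ≠ i} → Bool) :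
    ones (merge i a z) = (if a then (1:ℝ) else 0) + onesS i z := by
  unfold ones
  rw [← Finset.add_sum_erase Finset.univ _ (Finset.mem_univ i)]
  congr 1
  · simp [merge]
  · rw [Finset.sum_subtype (Finset.univ.erase i) (p := fun j => j ≠ i)
      (by intro x; simp [Finset.mem_erase])]
    exact Finset.sum_congr rfl fun j _ => by rw [merge_ne i a z j.2]

lemma onesS_false (i : Fin N) : onesS i (fun _ => false) = 0 := by simp [onesS]
lemma onesS_true (i : Fin N) (hN : 2 ≤ N) : onesS i (fun _ => true) = (N : ℝ) - 1 := by
  simp only [onesS, if_true, Finset.sum_const, nsmul_eq_mul, mul_one]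
  have : Fintype.card {j : Fin N // j ≠ i} = N - 1 := by
    rw [Fintype.card_subtype]
    simp [Finset.filter_ne', Finset.card_erase_of_mem]
  rw [Finset.card_univ, this, Nat.cast_sub (by omega), Nat.cast_one]

section D
variable (C ε : ℝ)

lemma exists_ne (hN : 2 ≤ N) (i : Fin N) : ((fun _ => false) : {j : Fin N // j ≠ i} → Bool) ≠ (fun _ => true) := by
  obtain ⟨j, _, hj⟩ := Finset.exists_mem_ne
    (s := (Finset.univ : Finset (Fin N))) (by simp; omega) i
  intro h
  have := congrFun h ⟨j, hj⟩
  simp at this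

lemma Umot_m0 (i : Fin N) (z : {j : Fin N // j ≠ i} → Bool) (y : Fin N → Bool) :
    Umot C ε (merge i false z) y
      = if z = (fun _ => false) then (if y = allO N then C else ε * ones y)
        else if y = allZ N then -(ε * onesS i z) else onesS i z - ones y := by
  by_cases hz : z = (fun _ => false)
  · rw [if_pos hz, (merge_false_eq_allZ i z).2 hz, Umot, if_pos rfl]
  · rw [if_neg hz, Umot,
      if_neg (fun h => hz ((merge_false_eq_allZ i z).1 h))]
    by_cases hy : y = allZ N
    · rw [if_pos hy, if_pos hy, if_neg (merge_false_ne_allO i z), ones_merge]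
      norm_num
    · rw [if_neg hy, if_neg hy, ones_merge]
      norm_num

lemma Umot_m1 (i : Fin N) (z : {j : Fin N // j ≠ i} → Bool) (y : Fin N → Bool)
    (hy1 : y ≠ allO N) :
    Umot C ε (merge i true z) y
      = if y = allZ N then -(if z = (fun _ => true) then C else ε * (1 + onesS i z))
        else (1 + onesS i z) - ones y := by
  rw [Umot, if_neg (merge_true_ne_allZ i z)]
  by_cases hy : y = allZ N
  · rw [if_pos hy, if_pos hy]
    by_cases hz : z = (fun _ => true)
    · rw [if_pos ((merge_true_eq_allO i z).2 hz), if_pos hz]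
    · rw [if_neg (fun h => hz ((merge_true_eq_allO i z).1 h)), if_neg hz, ones_merge]
      norm_num
  · rw [if_neg hy, if_neg hy, ones_merge]
    norm_num

lemma Umot_m1_allO (hN : 2 ≤ N) (i : Fin N) (z : {j : Fin N // j ≠ i} → Bool) :
    Umot C ε (merge i true z) (allO N) = (1 + onesS i z) - N := by
  rw [Umot, if_neg (merge_true_ne_allZ i z),
    if_neg (Ne.symm (allZ_ne_allO (by omega))), ones_merge, ones_allO]
  norm_num

/-- fixed-opponent per-profile difference -/
lemma d_allO (hN : 2 ≤ N) (i : Fin N) (z : {j : Fin N // j ≠ i} → Bool) :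
    Umot C ε (merge i false z) (allO N) - Umot C ε (merge i true z) (allO N)
      = -1 + (if z = (fun _ => false) then (N : ℝ) + C else 0) := by
  rw [Umot_m0, Umot_m1_allO C ε hN]
  by_cases hz : z = (fun _ => false)
  · rw [if_pos hz, if_pos hz, if_pos rfl, hz, onesS_false]
    ring
  · rw [if_neg hz, if_neg hz, if_neg (Ne.symm (allZ_ne_allO (by omega))), ones_allO]
    ring

/-- self-play per-profile difference, generic y -/
lemma d_gen (i : Fin N) (z : {j : Fin N // j ≠ i} → Bool)
    (y : Fin N → Bool) (hy0 : y ≠ allZ N) (hy1 : y ≠ allO N) :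
    Umot C ε (merge i true z) y - Umot C ε (merge i false z) y
      = 1 + (if z = (fun _ => false) then -((1 + ε) * ones y) else 0) := by
  rw [Umot_m0, Umot_m1 C ε i z y hy1, if_neg hy0, if_neg hy0]
  by_cases hz : z = (fun _ => false)
  · rw [if_pos hz, if_pos hz, if_neg hy1, hz, onesS_false]
    ring
  · rw [if_neg hz, if_neg hz]
    ring

/-- self-play per-profile difference, y = allO -/
lemma d_allO' (hN : 2 ≤ N) (i : Fin N) (z : {j : Fin N // j ≠ i} → Bool) :
    Umot C ε (merge i true z) (allO N) - Umot C ε (merge i false z) (allO N)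
      = 1 + (if z = (fun _ => false) then -((N : ℝ) + C) else 0) := by
  have := d_allO C ε hN i z
  by_cases hz : z = (fun _ => false) <;>
    simp only [if_pos, if_neg, hz, if_true, if_false] at * <;> linarith

/-- self-play per-profile difference, y = allZ -/
lemma d_allZ (hN : 2 ≤ N) (i : Fin N) (z : {j : Fin N // j ≠ i} → Bool) :
    Umot C ε (merge i true z) (allZ N) - Umot C ε (merge i false z) (allZ N)
      = -ε + (if z = (fun _ => true) then -(C - ε * N) else 0) := by
  have hZO : allZ N ≠ allO N := allZ_ne_allO (show 0 < N by omega)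
  rw [Umot_m0, Umot_m1 C ε i z (allZ N) hZO, if_pos rfl]
  by_cases hz : z = (fun _ => true)
  · rw [if_pos hz, if_pos hz,
      if_neg (show z ≠ fun _ => false by rw [hz]; exact (exists_ne hN i).symm),
      if_pos rfl, hz, onesS_true i hN]
    ring
  · rw [if_neg hz, if_neg hz]
    by_cases hz0 : z = (fun _ => false)
    · rw [if_pos hz0, if_neg hZO, ones_allZ, hz0, onesS_false]
      ring
    · rw [if_neg hz0, if_pos rfl]
      ring

end D
section Assemble
variable (C ε : ℝ) (π : Fin N → Bool → ℝ)

lemma sum_pointMass (w : Fin N → Bool) (f : (Fin N → Bool) → ℝ) :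
    ∑ y : Fin N → Bool, pointMass w y * f y = f w := by
  simp [pointMass, ite_mul, Finset.sum_ite_eq']

/-- Q-difference against the fixed opponent `1_N`. -/
lemma Qfx_diff (hN : 2 ≤ N) (h1 : ∀ j, π j false + π j true = 1) (i : Fin N) :
    Qf C ε π (pointMass (allO N)) i false - Qf C ε π (pointMass (allO N)) i true
      = -1 + W π i (fun _ => false) * ((N : ℝ) + C) := by
  rw [Qf_eq, Qf_eq, ← Finset.sum_sub_distrib]
  have : ∀ z : {j : Fin N // j ≠ i} → Bool,
      W π i z * (∑ y, pointMass (allO N) y * Umot C ε (merge i false z) y)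
        - W π i z * (∑ y, pointMass (allO N) y * Umot C ε (merge i true z) y)
      = W π i z * (-1 + if z = (fun _ => false) then (N : ℝ) + C else 0) := by
    intro z
    rw [sum_pointMass, sum_pointMass, ← mul_sub, d_allO C ε hN i z]
  simp only [this, sum_W_ite π i h1]

lemma sum_prodDist (h1 : ∀ j, π j false + π j true = 1) :
    ∑ y : Fin N → Bool, prodDist π y = 1 := by
  unfold prodDist
  rw [← Fintype.piFinset_univ, ← Finset.prod_univ_sum, Finset.prod_eq_one]
  intro j _
  rw [Fintype.sum_bool]
  linarith [h1 j]

lemma prodDist_allZ : prodDist π (allZ N) = ∏ j, π j false := rfl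
lemma prodDist_allO : prodDist π (allO N) = ∏ j, π j true := rfl

lemma prod_merge (i : Fin N) (b : Bool) (z : {j : Fin N // j ≠ i} → Bool) :
    ∏ j, π j (merge i b z j) = π i b * W π i z := by
  rw [← Finset.mul_prod_erase Finset.univ _ (Finset.mem_univ i), merge_self,
    prod_erase_eq_W]

lemma sum_prodDist_ones (h1 : ∀ j, π j false + π j true = 1) :
    ∑ y : Fin N → Bool, prodDist π y * ones y = ∑ k, π k true := by
  unfold prodDist ones
  simp only [Finset.mul_sum]
  rw [Finset.sum_comm]
  refine Finset.sum_congr rfl fun k _ => ?_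
  rw [sum_split k (fun y => (∏ j, π j (y j)) * if y k then (1:ℝ) else 0),
    Fintype.sum_prod_type]
  simp only [merge_self, prod_merge]
  rw [Fintype.sum_bool]
  simp only [if_true, if_false, mul_one, mul_zero, Finset.sum_const_zero, add_zero,
    ← Finset.mul_sum, sum_W π k h1, mul_one]
  simp

/-- Q-difference under self play. -/
lemma Qsp_diff (hN : 2 ≤ N) (h1 : ∀ j, π j false + π j true = 1) (i : Fin N) :
    Qf C ε π (prodDist π) i true - Qf C ε π (prodDist π) i false
      = 1 - W π i (fun _ => false) * (1 + ε) * (∑ k, π k true)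
        + (∏ j, π j false) * (-1 - ε - W π i (fun _ => true) * (C - ε * N))
        + (∏ j, π j true) * (W π i (fun _ => false) * (ε * N - C)) := by
  have hZO : allZ N ≠ allO N := allZ_ne_allO (show 0 < N by omega)
  set p := W π i (fun _ => false) with hp
  set r := W π i (fun _ => true) with hr
  have step1 : Qf C ε π (prodDist π) i true - Qf C ε π (prodDist π) i false
      = ∑ y : Fin N → Bool, prodDist π y *
          (∑ z : {j : Fin N // j ≠ i} → Bool,
            W π i z * (Umot C ε (merge i true z) y - Umot C ε (merge i false z) y)) := by
    rw [Qf_eq, Qf_eq, ← Finset.sum_sub_distrib]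
    have : ∀ z : {j : Fin N // j ≠ i} → Bool,
        W π i z * (∑ y, prodDist π y * Umot C ε (merge i true z) y)
          - W π i z * (∑ y, prodDist π y * Umot C ε (merge i false z) y)
        = ∑ y, prodDist π y *
            (W π i z * (Umot C ε (merge i true z) y - Umot C ε (merge i false z) y)) := by
      intro z
      rw [← mul_sub, ← Finset.sum_sub_distrib, Finset.mul_sum]
      exact Finset.sum_congr rfl fun y _ => by ring
    simp only [this]
    rw [Finset.sum_comm]
    exact Finset.sum_congr rfl fun y _ => (Finset.mul_sum _ _ _).symm
  have step2 : ∀ y : Fin N → Bool,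
      (∑ z : {j : Fin N // j ≠ i} → Bool,
        W π i z * (Umot C ε (merge i true z) y - Umot C ε (merge i false z) y))
      = (1 - p * ((1 + ε) * ones y))
        + (if y = allZ N then (-1 - ε - r * (C - ε * N)) else 0)
        + (if y = allO N then p * ((1 + ε) * (N : ℝ)) - p * ((N : ℝ) + C) else 0) := by
    intro y
    by_cases hy0 : y = allZ N
    · subst hy0
      simp only [if_pos rfl, if_neg hZO, ones_allZ, mul_zero, sub_zero]
      have : ∀ z : {j : Fin N // j ≠ i} → Bool,
          W π i z * (Umot C ε (merge i true z) (allZ N) - Umot C ε (merge i false z) (allZ N))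
          = W π i z * (-ε + if z = (fun _ => true) then -(C - ε * N) else 0) := fun z => by
        rw [d_allZ C ε hN i z]
      simp only [this, sum_W_ite π i h1, if_true]
      ring
    · by_cases hy1 : y = allO N
      · subst hy1
        rw [if_neg (Ne.symm hZO), if_pos rfl, ones_allO]
        have : ∀ z : {j : Fin N // j ≠ i} → Bool,
            W π i z * (Umot C ε (merge i true z) (allO N) - Umot C ε (merge i false z) (allO N))
            = W π i z * (1 + if z = (fun _ => false) then -((N : ℝ) + C) else 0) := fun z => by
          rw [d_allO' C ε hN i z]
        simp only [this, sum_W_ite π i h1]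
        ring
      · simp only [if_neg hy0, if_neg hy1, add_zero]
        have : ∀ z : {j : Fin N // j ≠ i} → Bool,
            W π i z * (Umot C ε (merge i true z) y - Umot C ε (merge i false z) y)
            = W π i z * (1 + if z = (fun _ => false) then -((1 + ε) * ones y) else 0) := fun z => by
          rw [d_gen C ε i z y hy0 hy1]
        simp only [this, sum_W_ite π i h1]
        ring
  rw [step1]
  simp only [step2]
  have expand : ∀ y : Fin N → Bool,
      prodDist π y * ((1 - p * ((1 + ε) * ones y)
          + (if y = allZ N then (-1 - ε - r * (C - ε * N)) else 0))
          + (if y = allO N then p * ((1 + ε) * (N : ℝ)) - p * ((N : ℝ) + C) else 0))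
      = prodDist π y * (1 - p * ((1 + ε) * ones y))
        + prodDist π y * (if y = allZ N then (-1 - ε - r * (C - ε * N)) else 0)
        + prodDist π y * (if y = allO N then p * ((1 + ε) * (N : ℝ)) - p * ((N : ℝ) + C) else 0) :=
    fun y => by ring
  simp only [expand]
  rw [Finset.sum_add_distrib, Finset.sum_add_distrib]
  have e1 : ∑ y : Fin N → Bool, prodDist π y * (1 - p * ((1 + ε) * ones y))
      = 1 - p * (1 + ε) * (∑ k, π k true) := by
    have : ∀ y : Fin N → Bool, prodDist π y * (1 - p * ((1 + ε) * ones y))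
        = prodDist π y - (p * (1 + ε)) * (prodDist π y * ones y) := fun y => by ring
    simp only [this]
    rw [Finset.sum_sub_distrib, sum_prodDist π h1, ← Finset.mul_sum,
      sum_prodDist_ones π h1]
  have e2 : ∑ y : Fin N → Bool, prodDist π y * (if y = allZ N then (-1 - ε - r * (C - ε * N)) else 0)
      = (∏ j, π j false) * (-1 - ε - r * (C - ε * N)) := by
    have : ∀ y : Fin N → Bool, prodDist π y * (if y = allZ N then (-1 - ε - r * (C - ε * N)) else 0)
        = if y = allZ N then prodDist π y * (-1 - ε - r * (C - ε * N)) else 0 := fun y => by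
      by_cases h : y = allZ N <;> simp [h]
    simp only [this]
    rw [Finset.sum_ite_eq' Finset.univ (allZ N)]
    simp [prodDist_allZ]
  have e3 : ∑ y : Fin N → Bool, prodDist π y * (if y = allO N then p * ((1 + ε) * (N : ℝ)) - p * ((N : ℝ) + C) else 0)
      = (∏ j, π j true) * (p * (ε * N - C)) := by
    have : ∀ y : Fin N → Bool, prodDist π y * (if y = allO N then p * ((1 + ε) * (N : ℝ)) - p * ((N : ℝ) + C) else 0)
        = if y = allO N then prodDist π y * (p * (ε * N - C)) else 0 := fun y => by
      by_cases h : y = allO N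
      · rw [if_pos h, if_pos h]; ring
      · rw [if_neg h, if_neg h, mul_zero]
    simp only [this]
    rw [Finset.sum_ite_eq' Finset.univ (allO N)]
    simp [prodDist_allO]
  rw [e1, e2, e3]

end Assemble

lemma card_ne (i : Fin N) : Fintype.card {j : Fin N // j ≠ i} = N - 1 := by
  rw [Fintype.card_subtype]
  simp [Finset.filter_ne', Finset.card_erase_of_mem]

lemma W_const (π : Fin N → Bool → ℝ) (i : Fin N) (b : Bool) (hsym : ∀ j, π j = π i) :
    W π i (fun _ => b) = (π i b) ^ (N - 1) := by
  unfold W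
  rw [Finset.prod_congr rfl (fun j _ => by rw [hsym j.1]), Finset.prod_const,
    Finset.card_univ, card_ne]

lemma W_false_eq_erase (π : Fin N → Bool → ℝ) (i : Fin N) :
    W π i (fun _ => false) = ∏ j ∈ Finset.univ.erase i, π j false := by
  unfold W
  rw [Finset.prod_subtype (Finset.univ.erase i) (p := fun j => j ≠ i)
    (by intro x; simp [Finset.mem_erase]) (fun j => π j false)]

end StrictAux

/-- Theorem 2, part 2 (strictness): from the symmetric initialization
`π_i⁰(0) = (N + C)^{−1/(N−1)}`, training against the fixed opponent `1_N` with
a preference-preserving algorithm maintains `Q_i^t(0) ≥ Q_i^t(1)` for all `t`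
and `i` (hence converges to the all-zeros global NE), while the same
initialization under self-play maintains `π^t₋ᵢ(0_{N−1}) < 1/N` and
`Q_i^t(0) < Q_i^t(1)` for all `t` and `i`, so the probability of action 0 is
non-increasing and self-play does not converge to the global NE; therefore
`S_μ` strictly contains `S_SP`. -/
theorem fixed_opponent_strictly_better (N : ℕ) (hN : 2 ≤ N) (C ε : ℝ)
    (hε : 0 < ε) (hεC : ε < C)
    (hCN : 2 + 2 * C + ε ≤ (N : ℝ)) (hNε : (N : ℝ) * ε ≤ C)
    (πfx πsp : ℕ → Fin N → Bool → ℝ)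
    (hfx1 : ∀ t j, πfx t j false + πfx t j true = 1) (hfx0 : ∀ t j b, 0 ≤ πfx t j b)
    (hsp1 : ∀ t j, πsp t j false + πsp t j true = 1) (hsp0 : ∀ t j b, 0 ≤ πsp t j b)
    -- the common symmetric initialization π_i⁰(0) = (N+C)^(−1/(N−1))
    (hinitfx : ∀ i, πfx 0 i false = ((N : ℝ) + C) ^ (-(1 : ℝ) / ((N : ℝ) - 1)))
    (hinitsp : ∀ i, πsp 0 i false = ((N : ℝ) + C) ^ (-(1 : ℝ) / ((N : ℝ) - 1)))
    -- the self-play policies stay symmetric across players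
    (hsym : ∀ t i j, πsp t i = πsp t j)
    -- preference preservation for the fixed-opponent sequence
    (hpreffx : ∀ t (i : Fin N),
      (∀ t' ≤ t, Qf C ε (πfx t') (pointMass (allO N)) i true ≤
                 Qf C ε (πfx t') (pointMass (allO N)) i false) →
      πfx t i false ≤ πfx (t + 1) i false)
    -- preference preservation for the self-play sequence
    (hprefsp : ∀ t (i : Fin N),
      (∀ t' ≤ t, Qf C ε (πsp t') (prodDist (πsp t')) i false ≤
                 Qf C ε (πsp t') (prodDist (πsp t')) i true) →
      πsp (t + 1) i false ≤ πsp t i false) :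
    -- against the fixed opponent 1_N action 0 stays weakly preferred
    (∀ t (i : Fin N),
      Qf C ε (πfx t) (pointMass (allO N)) i true ≤
        Qf C ε (πfx t) (pointMass (allO N)) i false) ∧
    -- under self-play the all-zeros mode is never approached
    (∀ t (i : Fin N),
      (∏ j ∈ Finset.univ.erase i, πsp t j false) < 1 / (N : ℝ) ∧
      Qf C ε (πsp t) (prodDist (πsp t)) i false <
        Qf C ε (πsp t) (prodDist (πsp t)) i true) ∧
    (∀ t (i : Fin N), πsp (t + 1) i false ≤ πsp t i false) := by

  classical
  have hNr : (2:ℝ) ≤ (N:ℝ) := by exact_mod_cast hN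
  have hC : (0:ℝ) < C := lt_trans hε hεC
  have hNC : (0:ℝ) < (N:ℝ) + C := by linarith
  have h1NC : (1:ℝ) ≤ (N:ℝ) + C := by linarith
  have hd : (N:ℝ) - 1 ≠ 0 := by linarith
  set q0 : ℝ := ((N : ℝ) + C) ^ (-(1 : ℝ) / ((N : ℝ) - 1)) with hq0def
  have hq0pos : 0 < q0 := Real.rpow_pos_of_pos hNC _
  have hq0le1 : q0 ≤ 1 :=
    Real.rpow_le_one_of_one_le_of_nonpos h1NC
      (div_nonpos_of_nonpos_of_nonneg (by norm_num) (by linarith))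
  have hcast : ((N - 1 : ℕ) : ℝ) = (N : ℝ) - 1 := by
    rw [Nat.cast_sub (by omega), Nat.cast_one]
  have hq0pow : q0 ^ (N - 1) = 1 / ((N:ℝ) + C) := by
    rw [hq0def, ← Real.rpow_natCast (((N : ℝ) + C) ^ (-(1 : ℝ) / ((N : ℝ) - 1))) (N-1),
      ← Real.rpow_mul hNC.le, hcast]
    rw [show (-(1 : ℝ) / ((N : ℝ) - 1)) * ((N:ℝ) - 1) = -1 by field_simp]
    rw [Real.rpow_neg_one, one_div]
  -- ### Part 1: fixed opponent
  have Qcond : ∀ (π : Fin N → Bool → ℝ), (∀ j, π j false + π j true = 1) →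
      (∀ j, q0 ≤ π j false) → ∀ i : Fin N,
      Qf C ε π (pointMass (allO N)) i true ≤ Qf C ε π (pointMass (allO N)) i false := by
    intro π h1 hge i
    have hW : q0 ^ (N-1) ≤ StrictAux.W π i (fun _ => false) := by
      unfold StrictAux.W
      calc q0 ^ (N-1) = ∏ _j : {j : Fin N // j ≠ i}, q0 := by
            rw [Finset.prod_const, Finset.card_univ, StrictAux.card_ne]
        _ ≤ ∏ j : {j : Fin N // j ≠ i}, π j.1 false :=
            Finset.prod_le_prod (fun _ _ => hq0pos.le) (fun j _ => hge j.1)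
    have hdiff := StrictAux.Qfx_diff C ε π hN h1 i
    rw [hq0pow] at hW
    have h2 : 1 ≤ StrictAux.W π i (fun _ => false) * ((N:ℝ) + C) := by
      rw [div_le_iff₀ hNC] at hW
      linarith
    linarith
  have invfx : ∀ t, ∀ t' ≤ t, ∀ j, q0 ≤ πfx t' j false := by
    intro t
    induction t with
    | zero =>
      intro t' ht' j
      interval_cases t'
      rw [hinitfx j]
    | succ t ih =>
      intro t' ht' j
      rcases Nat.lt_succ_iff_lt_or_eq.1 (Nat.lt_succ_of_le ht') with h | h
      · exact ih t' (by omega) j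
      · subst h
        calc q0 ≤ πfx t j false := ih t le_rfl j
          _ ≤ πfx (t+1) j false :=
            hpreffx t j (fun t'' ht'' => Qcond (πfx t'') (hfx1 t'') (ih t'' ht'') j)
  refine ⟨fun t i => Qcond (πfx t) (hfx1 t) (invfx t t le_rfl) i, ?_⟩
  -- ### Part 2 setup: self play
  · have Qstrict : ∀ t, (∀ j, πsp t j false ≤ q0) → ∀ i : Fin N,
        Qf C ε (πsp t) (prodDist (πsp t)) i false < Qf C ε (πsp t) (prodDist (πsp t)) i true := by
      intro t hle i
      have h1 := hsp1 t
      have h0 := hsp0 t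
      have hsymi : ∀ j, πsp t j = πsp t i := fun j => hsym t j i
      set q : ℝ := πsp t i false with hqdef
      have hq0' : 0 ≤ q := h0 i false
      have hq1 : q ≤ 1 := by have := h1 i; have := h0 i true; linarith
      have hp : q ^ (N-1) ≤ 1 / ((N:ℝ) + C) := by
        rw [← hq0pow]
        exact pow_le_pow_left₀ hq0' (hle i) _
      have htrue : ∀ j, πsp t j true = 1 - q := fun j => by
        rw [hsymi j]; have := h1 i; linarith
      have hfalse : ∀ j, πsp t j false = q := fun j => by rw [hsymi j]
      have hWf : StrictAux.W (πsp t) i (fun _ => false) = q ^ (N-1) :=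
        StrictAux.W_const (πsp t) i false hsymi
      have hWt : StrictAux.W (πsp t) i (fun _ => true) = (1-q) ^ (N-1) := by
        rw [StrictAux.W_const (πsp t) i true hsymi, htrue i]
      have hsumt : ∑ k, πsp t k true = (N:ℝ) * (1-q) := by
        simp only [htrue]
        rw [Finset.sum_const, Finset.card_univ, Fintype.card_fin, nsmul_eq_mul]
      have hPf : ∏ j, πsp t j false = q ^ N := by
        simp only [hfalse]
        rw [Finset.prod_const, Finset.card_univ, Fintype.card_fin]
      have hPt : ∏ j, πsp t j true = (1-q) ^ N := by
        simp only [htrue]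
        rw [Finset.prod_const, Finset.card_univ, Fintype.card_fin]
      have hdiff := StrictAux.Qsp_diff C ε (πsp t) hN h1 i
      rw [hWf, hWt, hsumt, hPf, hPt] at hdiff
      have hqN : q ^ N = q ^ (N-1) * q := by
        rw [← pow_succ, Nat.sub_add_cancel (by omega)]
      have hqN' : (1-q) ^ N = (1-q) ^ (N-1) * (1-q) := by
        rw [← pow_succ, Nat.sub_add_cancel (by omega)]
      rw [hqN, hqN'] at hdiff
      set a : ℝ := q ^ (N-1) with hadef
      set b : ℝ := (1-q) ^ (N-1) with hbdef
      have hkey : a * ((1+ε) * ((N:ℝ) - ((N:ℝ)-1) * q) + b * (C - ε * (N:ℝ))) < 1 := by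
        have ha0 : 0 ≤ a := pow_nonneg hq0' _
        have hb1 : b ≤ 1 := pow_le_one₀ (by linarith) (by linarith)
        have hb0 : 0 ≤ b := pow_nonneg (by linarith) _
        have hCε : 0 ≤ C - ε * (N:ℝ) := by
          have h' : ε * (N:ℝ) = (N:ℝ) * ε := mul_comm _ _
          linarith
        rcases eq_or_lt_of_le hq0' with h | h
        · have : a = 0 := by rw [hadef, ← h, zero_pow (by omega : N - 1 ≠ 0)]
          rw [this]; norm_num
        · have ha : 0 < a := pow_pos h _
          have b1 : (1+ε) * ((N:ℝ) - ((N:ℝ)-1) * q) + b * (C - ε * (N:ℝ))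
              ≤ (1+ε) * ((N:ℝ) - ((N:ℝ)-1) * q) + (C - ε * (N:ℝ)) := by
            have := mul_le_of_le_one_left hCε hb1
            linarith
          have b2 : (1+ε) * ((N:ℝ) - ((N:ℝ)-1) * q) + (C - ε * (N:ℝ)) < (N:ℝ) + C := by
            have hpos : 0 < (1+ε) * (((N:ℝ)-1) * q) :=
              mul_pos (by linarith) (mul_pos (by linarith) h)
            have expand : (1+ε) * ((N:ℝ) - ((N:ℝ)-1) * q) + (C - ε * (N:ℝ))
                = (N:ℝ) + C - (1+ε) * (((N:ℝ)-1) * q) := by ring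
            rw [expand]
            linarith
          have b3 : a * ((N:ℝ) + C) ≤ 1 := by
            have := mul_le_mul_of_nonneg_right hp hNC.le
            rw [div_mul_eq_mul_div, one_mul, div_self (ne_of_gt hNC)] at this
            exact this
          calc a * ((1+ε) * ((N:ℝ) - ((N:ℝ)-1) * q) + b * (C - ε * (N:ℝ)))
              < a * ((N:ℝ) + C) := mul_lt_mul_of_pos_left (lt_of_le_of_lt b1 b2) ha
            _ ≤ 1 := b3
      have hexp : (1:ℝ) - a * (1 + ε) * ((N:ℝ) * (1 - q))
          + a * q * (-1 - ε - b * (C - ε * (N:ℝ)))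
          + b * (1-q) * (a * (ε * (N:ℝ) - C))
          = 1 - a * ((1+ε) * ((N:ℝ) - ((N:ℝ)-1) * q) + b * (C - ε * (N:ℝ))) := by ring
      rw [hexp] at hdiff
      linarith
    have invsp : ∀ t, ∀ t' ≤ t, ∀ j, πsp t' j false ≤ q0 := by
      intro t
      induction t with
      | zero =>
        intro t' ht' j
        interval_cases t'
        rw [hinitsp j]
      | succ t ih =>
        intro t' ht' j
        rcases Nat.lt_succ_iff_lt_or_eq.1 (Nat.lt_succ_of_le ht') with h | h
        · exact ih t' (by omega) j
        · subst h
          calc πsp (t+1) j false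
              ≤ πsp t j false :=
                hprefsp t j (fun t'' ht'' => (Qstrict t'' (ih t'' ht'') j).le)
            _ ≤ q0 := ih t le_rfl j
    refine ⟨fun t i => ⟨?_, Qstrict t (invsp t t le_rfl) i⟩,
      fun t i => hprefsp t i (fun t'' ht'' => (Qstrict t'' (invsp t t'' ht'') i).le)⟩
    have hprod : (∏ j ∈ Finset.univ.erase i, πsp t j false) ≤ q0 ^ (N-1) := by
      rw [← StrictAux.W_false_eq_erase]
      unfold StrictAux.W
      calc (∏ j : {j : Fin N // j ≠ i}, πsp t j.1 false)
          ≤ ∏ _j : {j : Fin N // j ≠ i}, q0 :=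
            Finset.prod_le_prod (fun j _ => hsp0 t j.1 false)
              (fun j _ => invsp t t le_rfl j.1)
        _ = q0 ^ (N-1) := by
            rw [Finset.prod_const, Finset.card_univ, StrictAux.card_ne]
    have hlt : q0 ^ (N-1) < 1 / (N:ℝ) := by
      rw [hq0pow]
      apply div_lt_div_of_pos_left one_pos (by linarith) (by linarith)
    exact lt_of_le_of_lt hprod hlt
end
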